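/- arXiv:2106.01774 — 4 statements merged into one kernel-verified Lean document; each statement's English description precedes it below -/
import Mathlib

section
/- Let n ≥ 2, s ≥ 2, and let G(J(P_n)) = {u_1,…,u_r}. Then the following are equivalent for any indices i_1,…,i_s: (1) u_{i_1}⋯u_{i_s} ∈ G(J(P_n)^s); (2) u_p u_q ∈ G(J(P_n)^2) for all p, q ∈ {i_1,…,i_s}. -/
open MvPolynomial

noncomputable section

/-- The cover ideal of the path graph `P_n` on vertices `x_1, …, x_n`:
the intersection of the ideals `(x_i, x_{i+1})` over the edges of the path. -/
def pathCoverIdeal (k : Type*) [Field k] (n : ℕ) : Ideal (MvPolynomial ℕ k) :=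
  ⨅ i ∈ Finset.Icc 1 (n - 1), Ideal.span {(X i : MvPolynomial ℕ k), X (i + 1)}

/-- A monomial with coefficient `1`. -/
def IsMonomial {k : Type*} [Field k] (m : MvPolynomial ℕ k) : Prop :=
  ∃ a : ℕ →₀ ℕ, m = monomial a 1

/-- The minimal monomial generating set `G(I)` of a monomial ideal `I`:
monomials of `I` that are not strictly divisible by another monomial of `I`. -/
def minGens {k : Type*} [Field k] (I : Ideal (MvPolynomial ℕ k)) :
    Set (MvPolynomial ℕ k) :=
  {m | IsMonomial m ∧ m ∈ I ∧ ∀ m', IsMonomial m' → m' ∈ I → m' ∣ m → m' = m}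

/-- The rooted list `R(P_n)` of the path `P_n`. -/
def rootedList (k : Type*) [Field k] : ℕ → List (MvPolynomial ℕ k)
  | 0 => [1]
  | 1 => [1]
  | 2 => [X 1, X 2]
  | 3 => [X 2, X 1 * X 3]
  | (n + 4) =>
      ((rootedList k (n + 2)).map fun u => X (n + 3) * u) ++
      ((rootedList k (n + 1)).map fun u => X (n + 4) * X (n + 2) * u)

/-- `F(I^s)`: the set of `s`-fold products of minimal generators of `I`. -/
def sFold {k : Type*} [Field k] (I : Ideal (MvPolynomial ℕ k)) (s : ℕ) :
    Set (MvPolynomial ℕ k) :=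
  {m | ∃ L : List (MvPolynomial ℕ k), L.length = s ∧ (∀ u ∈ L, u ∈ minGens I) ∧ m = L.prod}

/-- `a >_lex b`: the first entry where `a` and `b` differ is bigger in `a`. -/
def lexGt (a b : ℕ → ℕ) : Prop :=
  ∃ t, (∀ j, j < t → a j = b j) ∧ b t < a t

/-- `a` is an exponent-vector expression of `M` as an `s`-fold product of the terms of
the list `L`. -/
def IsExprOn {k : Type*} [Field k] (L : List (MvPolynomial ℕ k)) (s : ℕ) (a : ℕ → ℕ)
    (M : MvPolynomial ℕ k) : Prop :=
  (∀ i, L.length ≤ i → a i = 0) ∧ (∑ i ∈ Finset.range L.length, a i) = s ∧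
    M = ∏ i ∈ Finset.range L.length, (L.getD i 1) ^ (a i)

/-- `a` is the (lexicographically) maximal expression of `M` as an `s`-fold product of
the terms of the list `L`. -/
def IsMaxExpr {k : Type*} [Field k] (L : List (MvPolynomial ℕ k)) (s : ℕ) (a : ℕ → ℕ)
    (M : MvPolynomial ℕ k) : Prop :=
  IsExprOn L s a M ∧ ∀ b, IsExprOn L s b M → b ≠ a → lexGt a b

/-- The rooted order `M >_R N` on `s`-fold products, relative to the list `L` of
minimal generators: maximal expressions are compared lexicographically. -/
def rootedGt {k : Type*} [Field k] (L : List (MvPolynomial ℕ k)) (s : ℕ)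
    (M N : MvPolynomial ℕ k) : Prop :=
  ∃ a b, IsMaxExpr L s a M ∧ IsMaxExpr L s b N ∧ lexGt a b

/-- An ideal is generated by a subset of the variables. -/
def genByVars {k : Type*} [Field k] (I : Ideal (MvPolynomial ℕ k)) : Prop :=
  ∃ T : Set ℕ, I = Ideal.span ((fun i => (X i : MvPolynomial ℕ k)) '' T)

end

/-!
A monomial `x^a` lies in `J(P_n)^s` iff `a_j + a_{j+1} ≥ s` on every edge (an `s`-cover splits
off a vertex cover by parity, `P_n` being bipartite), and it is a minimal generator iff moreover
every vertex of its support lies on an edge where equality holds. For a product of `s` squarefree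
vertex covers `u_t`, an edge is tight iff every `u_t` meets it exactly once. If a vertex `v` of
the support lay on no tight edge, each of the at most two edges at `v` would be met twice by some
`u_t`, and the product of the two covers so chosen would already fail to be a minimal generator
of `J(P_n)^2`.
-/

section Covers

/-- `a` is an `s`-cover of the graph on `ℕ` whose edges are `{j, j + 1}` for `j ∈ E`. -/
def IsCover (E : Set ℕ) (s : ℕ) (a : ℕ → ℕ) : Prop :=
  ∀ j ∈ E, s ≤ a j + a (j + 1)

/-- By `IsCover.isMinimalCover_iff`, these are exactly the minimal `s`-covers. -/
def IsMinimalCover (E : Set ℕ) (s : ℕ) (a : ℕ → ℕ) : Prop :=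
  IsCover E s a ∧ ∀ v, a v ≠ 0 → ∃ j ∈ E, (j = v ∨ j + 1 = v) ∧ a j + a (j + 1) = s

variable {E : Set ℕ}

theorem IsCover.add {r s : ℕ} {a b : ℕ → ℕ} (ha : IsCover E r a) (hb : IsCover E s b) :
    IsCover E (r + s) (a + b) := fun j hj => by
  have := ha j hj
  have := hb j hj
  simp only [Pi.add_apply]
  omega

/-- The witness takes the vertex `v` iff `2 a_v ≥ s + 1 + (v mod 2)`; this works because every
edge joins an even and an odd vertex. -/
theorem IsCover.exists_add {s : ℕ} {a : ℕ →₀ ℕ} (ha : IsCover E (s + 1) a) :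
    ∃ b c : ℕ →₀ ℕ, a = b + c ∧ IsCover E 1 b ∧ IsCover E s c := by
  let b : ℕ →₀ ℕ := Finsupp.onFinset a.support
    (fun v => if s + 1 + v % 2 ≤ 2 * a v then 1 else 0)
    fun v hv => Finsupp.mem_support_iff.2 fun h => hv (by simp [h])
  have hb (v : ℕ) : b v = if s + 1 + v % 2 ≤ 2 * a v then 1 else 0 := rfl
  have hba : b ≤ a := fun v => by rw [hb]; split_ifs <;> omega
  refine ⟨b, a - b, (add_tsub_cancel_of_le hba).symm, fun j hj => ?_, fun j hj => ?_⟩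
  all_goals
    have := ha j hj
    simp only [Finsupp.tsub_apply, hb]
    split_ifs <;> omega

theorem IsCover.isMinimalCover_iff {s : ℕ} {a : ℕ →₀ ℕ} (ha : IsCover E s a) :
    IsMinimalCover E s a ↔ ∀ v, a v ≠ 0 → ¬ IsCover E s ⇑(a - Finsupp.single v 1 : ℕ →₀ ℕ) := by
  refine (and_iff_right ha).trans (forall₂_congr fun v hv => ?_)
  simp only [IsCover, not_forall, not_le, exists_prop]
  constructor
  · rintro ⟨j, hj, hjv, hjs⟩
    refine ⟨j, hj, ?_⟩
    rcases hjv with rfl | rfl <;>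
      simp only [Finsupp.tsub_apply, Finsupp.single_apply] <;> split_ifs <;> omega
  · rintro ⟨j, hj, hlt⟩
    have := ha j hj
    refine ⟨j, hj, ?_⟩
    simp only [Finsupp.tsub_apply, Finsupp.single_apply] at hlt
    split_ifs at hlt <;> omega

variable {ι : Type*} [Fintype ι] {c : ι → ℕ → ℕ}

theorem isCover_sum (hc : ∀ t, IsCover E 1 (c t)) : IsCover E (Fintype.card ι) (∑ t, c t) :=
  fun j hj => by
    rw [Finset.sum_apply, Finset.sum_apply, ← Finset.sum_add_distrib, Fintype.card_eq_sum_ones]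
    exact Finset.sum_le_sum fun t _ => hc t j hj

theorem sum_add_sum_eq_card_iff (hc : ∀ t, IsCover E 1 (c t)) {j : ℕ} (hj : j ∈ E) :
    (∑ t, c t) j + (∑ t, c t) (j + 1) = Fintype.card ι ↔ ∀ t, c t j + c t (j + 1) = 1 := by
  rw [Finset.sum_apply, Finset.sum_apply, ← Finset.sum_add_distrib, Fintype.card_eq_sum_ones,
    eq_comm, Finset.sum_eq_sum_iff_of_le fun t _ => hc t j hj]
  simp only [Finset.mem_univ, true_implies, eq_comm]

theorem isMinimalCover_sum_iff (h01 : ∀ t v, c t v ≤ 1) (hc : ∀ t, IsCover E 1 (c t)) :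
    IsMinimalCover E (Fintype.card ι) (∑ t, c t) ↔ ∀ p q, IsMinimalCover E 2 (c p + c q) := by
  have hsum_ne_zero {v : ℕ} {p : ι} (hp : c p v ≠ 0) : (∑ t, c t) v ≠ 0 := by
    rw [Finset.sum_apply]
    exact (Finset.sum_pos' (fun _ _ => Nat.zero_le _) ⟨p, Finset.mem_univ p, by omega⟩).ne'
  constructor
  · rintro ⟨-, htight⟩ p q
    refine ⟨(hc p).add (hc q), fun v hv => ?_⟩
    obtain hp | hq : c p v ≠ 0 ∨ c q v ≠ 0 := by simp only [Pi.add_apply] at hv; omega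
    all_goals
      obtain ⟨j, hj, hjv, hjs⟩ := htight v (hsum_ne_zero ‹_›)
      have hall := (sum_add_sum_eq_card_iff hc hj).1 hjs
      have := hall p
      have := hall q
      exact ⟨j, hj, hjv, by simp only [Pi.add_apply]; omega⟩
  · intro hpair
    refine ⟨isCover_sum hc, fun v hv => ?_⟩
    obtain ⟨p, -, hp⟩ := Finset.exists_ne_zero_of_sum_ne_zero (by rwa [Finset.sum_apply] at hv)
    by_contra! hloose
    -- For each of the edges `v - 1` and `v`, pick a cover meeting it twice (or `c p` if it is
    -- not an edge at `v`); these two picks contradict `hpair`.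
    have hpick (j : ℕ) : ∃ t, c t v ≠ 0 ∧
        (j ∈ E → (j = v ∨ j + 1 = v) → c t j + c t (j + 1) ≠ 1) := by
      by_cases hj : j ∈ E ∧ (j = v ∨ j + 1 = v)
      · obtain ⟨t, ht⟩ := not_forall.1 fun h =>
          hloose j hj.1 hj.2 ((sum_add_sum_eq_card_iff hc hj.1).2 h)
        have := h01 t j
        have := h01 t (j + 1)
        have := hc t j hj.1
        exact ⟨t, by rcases hj.2 with rfl | rfl <;> omega, fun _ _ => ht⟩
      · exact ⟨p, hp, fun h1 h2 => absurd ⟨h1, h2⟩ hj⟩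
    obtain ⟨t₁, ht₁v, ht₁⟩ := hpick v
    obtain ⟨t₂, -, ht₂⟩ := hpick (v - 1)
    obtain ⟨j, hj, hjv, hj2⟩ := (hpair t₁ t₂).2 v (by simp only [Pi.add_apply]; omega)
    simp only [Pi.add_apply] at hj2
    have := hc t₁ j hj
    have := hc t₂ j hj
    obtain rfl | rfl := hjv
    · exact ht₁ hj (Or.inl rfl) (by omega)
    · rw [Nat.add_sub_cancel] at ht₂
      exact ht₂ hj (Or.inr rfl) (by omega)

end Covers

section MonomialIdeals

variable {k : Type*} [Field k]

theorem monomial_mem_minGens_iff {I : Ideal (MvPolynomial ℕ k)} {a : ℕ →₀ ℕ} :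
    monomial a 1 ∈ minGens I ↔
      monomial a 1 ∈ I ∧ ∀ v, a v ≠ 0 → monomial (a - Finsupp.single v 1) (1 : k) ∉ I := by
  constructor
  · rintro ⟨-, haI, hmin⟩
    refine ⟨haI, fun v hv hvI => ?_⟩
    have := congrArg (· v) <| monomial_left_injective one_ne_zero <|
      hmin _ ⟨_, rfl⟩ hvI (monomial_dvd_monomial.2 ⟨Or.inr tsub_le_self, dvd_rfl⟩)
    simp only [Finsupp.tsub_apply, Finsupp.single_eq_same] at this
    omega
  · rintro ⟨haI, hmin⟩
    refine ⟨⟨a, rfl⟩, haI, ?_⟩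
    rintro _ ⟨b, rfl⟩ hbI hdvd
    have hba : b ≤ a := (monomial_dvd_monomial.1 hdvd).1.resolve_left one_ne_zero
    by_contra hne
    obtain ⟨v, hv⟩ : ∃ v, b v < a v := by
      by_contra! h
      exact hne (congrArg (monomial · 1) (le_antisymm hba h))
    refine hmin v (by omega) (Ideal.mem_of_dvd _ ?_ hbI)
    refine monomial_dvd_monomial.2 ⟨Or.inr fun w => ?_, dvd_rfl⟩
    have := hba w
    simp only [Finsupp.tsub_apply, Finsupp.single_apply]
    split_ifs with h <;> [subst h; skip] <;> omega

theorem monomial_mem_span_X_pair_iff {a : ℕ →₀ ℕ} {j : ℕ} :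
    monomial a (1 : k) ∈ Ideal.span {X j, X (j + 1)} ↔ 1 ≤ a j + a (j + 1) := by
  classical
  rw [← Set.image_pair, mem_ideal_span_X_image]
  simp only [support_monomial, one_ne_zero, if_false, Finset.mem_singleton, forall_eq,
    Set.mem_insert_iff, Set.mem_singleton_iff, exists_eq_or_imp, exists_eq_left]
  omega

theorem span_X_pair_pow_le (j : ℕ) : ∀ s : ℕ,
    Ideal.span {X j, X (j + 1)} ^ s ≤
      Ideal.span ((fun b => monomial b (1 : k)) '' {b | s ≤ b j + b (j + 1)})
  | 0 => by
    rw [pow_zero, Ideal.one_eq_top, top_le_iff, Ideal.eq_top_iff_one]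
    exact Ideal.subset_span ⟨0, by simp, rfl⟩
  | s + 1 => by
    rw [pow_succ]
    refine (Ideal.mul_mono_left (span_X_pair_pow_le j s)).trans ?_
    rw [Ideal.span_mul_span']
    refine Ideal.span_mono ?_
    rintro _ ⟨_, ⟨b, hb, rfl⟩, _, hx, rfl⟩
    simp only [Set.mem_ofPred_eq] at hb
    rcases hx with rfl | rfl
    · refine ⟨b + Finsupp.single j 1, ?_, by simp [X, monomial_mul]⟩
      simp only [Set.mem_ofPred_eq, Finsupp.add_apply, Finsupp.single_apply]
      split_ifs <;> omega
    · refine ⟨b + Finsupp.single (j + 1) 1, ?_, by simp [X, monomial_mul]⟩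
      simp only [Set.mem_ofPred_eq, Finsupp.add_apply, Finsupp.single_apply]
      split_ifs <;> omega

theorem monomial_mem_pathCoverIdeal_iff {n : ℕ} {a : ℕ →₀ ℕ} :
    monomial a (1 : k) ∈ pathCoverIdeal k n ↔ IsCover (Finset.Icc 1 (n - 1) : Set ℕ) 1 a := by
  simp only [pathCoverIdeal, Submodule.mem_iInf, monomial_mem_span_X_pair_iff]
  rfl

theorem monomial_mem_pathCoverIdeal_pow_iff {n s : ℕ} {a : ℕ →₀ ℕ} :
    monomial a (1 : k) ∈ pathCoverIdeal k n ^ s ↔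
      IsCover (Finset.Icc 1 (n - 1) : Set ℕ) s a := by
  constructor
  · intro h j hj
    have hJ : pathCoverIdeal k n ≤ Ideal.span {X j, X (j + 1)} := iInf₂_le j hj
    have hle := (Ideal.pow_right_mono hJ s).trans (span_X_pair_pow_le j s)
    obtain ⟨b, hb, hba⟩ :=
      mem_ideal_span_monomial_image.1 (hle h) a (by classical simp [support_monomial])
    exact hb.trans (add_le_add (hba j) (hba (j + 1)))
  · induction s generalizing a with
    | zero => simp
    | succ s ih =>
      intro ha
      obtain ⟨b, c, rfl, hb, hc⟩ := ha.exists_add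
      rw [← one_mul (1 : k), ← monomial_mul, pow_succ']
      exact Ideal.mul_mem_mul (monomial_mem_pathCoverIdeal_iff.2 hb) (ih hc)

theorem monomial_mem_minGens_pathCoverIdeal_pow_iff {n s : ℕ} {a : ℕ →₀ ℕ} :
    monomial a (1 : k) ∈ minGens (pathCoverIdeal k n ^ s) ↔
      IsMinimalCover (Finset.Icc 1 (n - 1) : Set ℕ) s a := by
  simp only [monomial_mem_minGens_iff, monomial_mem_pathCoverIdeal_pow_iff]
  exact ⟨fun h => h.1.isMinimalCover_iff.2 h.2, fun h => ⟨h.1, h.1.isMinimalCover_iff.1 h⟩⟩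

theorem exists_vertexCover_of_mem_rootedList :
    ∀ {n : ℕ} {u : MvPolynomial ℕ k}, u ∈ rootedList k n →
      ∃ S ⊆ Finset.Icc 1 n, (∀ j ∈ Finset.Icc 1 (n - 1), j ∈ S ∨ j + 1 ∈ S) ∧ u = ∏ v ∈ S, X v
  | 0, u, hu | 1, u, hu => ⟨∅, by simp_all [rootedList]⟩
  | 2, u, hu => by
    simp only [rootedList, List.mem_cons, List.not_mem_nil, or_false] at hu
    rcases hu with rfl | rfl
    exacts [⟨{1}, by decide, by decide, by simp⟩, ⟨{2}, by decide, by decide, by simp⟩]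
  | 3, u, hu => by
    simp only [rootedList, List.mem_cons, List.not_mem_nil, or_false] at hu
    rcases hu with rfl | rfl
    exacts [⟨{2}, by decide, by decide, by simp⟩, ⟨{1, 3}, by decide, by decide, by simp⟩]
  | n + 4, u, hu => by
    rw [rootedList, List.mem_append, List.mem_map, List.mem_map] at hu
    rcases hu with ⟨u, hu, rfl⟩ | ⟨u, hu, rfl⟩
    · obtain ⟨S, hS, hcov, rfl⟩ := exists_vertexCover_of_mem_rootedList hu
      refine ⟨insert (n + 3) S, Finset.insert_subset (by simp)
        (hS.trans (Finset.Icc_subset_Icc_right (by omega))), fun j hj => ?_, ?_⟩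
      · simp only [Finset.mem_Icc] at hj
        rcases (by omega : j ≤ n + 1 ∨ j = n + 2 ∨ j = n + 3) with h | rfl | rfl
        · rcases hcov j (Finset.mem_Icc.2 ⟨hj.1, by omega⟩) with h' | h' <;> simp [h']
        all_goals simp
      · rw [Finset.prod_insert fun h => by have := Finset.mem_Icc.1 (hS h); omega]
    · obtain ⟨S, hS, hcov, rfl⟩ := exists_vertexCover_of_mem_rootedList hu
      have hS' (v : ℕ) (hv : v ∈ S) : 1 ≤ v ∧ v ≤ n + 1 := Finset.mem_Icc.1 (hS hv)
      refine ⟨insert (n + 4) (insert (n + 2) S), Finset.insert_subset (by simp)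
        (Finset.insert_subset (by simp) (hS.trans (Finset.Icc_subset_Icc_right (by omega)))),
        fun j hj => ?_, ?_⟩
      · simp only [Finset.mem_Icc] at hj
        rcases (by omega : j ≤ n ∨ j = n + 1 ∨ j = n + 2 ∨ j = n + 3) with h | rfl | rfl | rfl
        · rcases hcov j (Finset.mem_Icc.2 ⟨hj.1, by omega⟩) with h' | h' <;> simp [h']
        all_goals simp
      · have hn4 : n + 4 ∉ insert (n + 2) S := by
          rw [Finset.mem_insert, not_or]
          exact ⟨by omega, fun h => by have := hS' _ h; omega⟩
        rw [Finset.prod_insert hn4, Finset.prod_insert fun h => by have := hS' _ h; omega,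
          mul_assoc]

theorem exists_squarefree_cover_of_mem_rootedList {n : ℕ} {u : MvPolynomial ℕ k}
    (hu : u ∈ rootedList k n) : ∃ c : ℕ →₀ ℕ, u = monomial c 1 ∧ (∀ v, c v ≤ 1) ∧
      IsCover (Finset.Icc 1 (n - 1) : Set ℕ) 1 c := by
  classical
  obtain ⟨S, -, hcov, rfl⟩ := exists_vertexCover_of_mem_rootedList hu
  have hc (v : ℕ) : (∑ w ∈ S, Finsupp.single w 1 : ℕ →₀ ℕ) v = if v ∈ S then 1 else 0 := by
    simp [Finsupp.finsetSum_apply, Finsupp.single_apply]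
  refine ⟨∑ w ∈ S, Finsupp.single w 1, by rw [monomial_sum_one]; rfl, fun v => ?_,
    fun j hj => ?_⟩
  · rw [hc]
    split_ifs <;> omega
  · rw [hc, hc]
    rcases hcov j hj with h | h <;> simp [h]

end MonomialIdeals

theorem minimal_sFold_iff_pairs_minimal_general (k : Type*) [Field k]
    (n s : ℕ)
    (i : Fin s → ℕ) (hi : ∀ t, i t < (rootedList k n).length) :
    (∏ t, (rootedList k n).getD (i t) 1) ∈ minGens ((pathCoverIdeal k n) ^ s) ↔
      ∀ p q : Fin s,
        (rootedList k n).getD (i p) 1 * (rootedList k n).getD (i q) 1 ∈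
          minGens ((pathCoverIdeal k n) ^ 2) := by
  have hmem (t : Fin s) : (rootedList k n).getD (i t) 1 ∈ rootedList k n := by
    rw [List.getD_eq_getElem _ _ (hi t)]
    exact List.getElem_mem (hi t)
  choose c hc h01 hcov using fun t => exists_squarefree_cover_of_mem_rootedList (hmem t)
  simp only [hc, ← monomial_sum_one, monomial_mul, one_mul,
    monomial_mem_minGens_pathCoverIdeal_pow_iff, Finsupp.coe_finsetSum, Finsupp.coe_add]
  simpa using isMinimalCover_sum_iff h01 hcov

/-- Let `n ≥ 2`, `s ≥ 2`, and let `u_1, …, u_r` be the minimal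
generators of `J(P_n)` (enumerated by the rooted list).  For any indices
`i_1, …, i_s`, the product `u_{i_1} ⋯ u_{i_s}` is a minimal generator of `J(P_n)^s` if
and only if `u_p u_q ∈ G(J(P_n)^2)` for all `p, q ∈ {i_1, …, i_s}`. -/
theorem minimal_sFold_iff_pairs_minimal (k : Type*) [Field k]
    (n s : ℕ) (hn : 2 ≤ n) (hs : 2 ≤ s)
    (i : Fin s → ℕ) (hi : ∀ t, i t < (rootedList k n).length) :
    (∏ t, (rootedList k n).getD (i t) 1) ∈ minGens ((pathCoverIdeal k n) ^ s) ↔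
      ∀ p q : Fin s,
        (rootedList k n).getD (i p) 1 * (rootedList k n).getD (i q) 1 ∈
          minGens ((pathCoverIdeal k n) ^ 2) :=
  minimal_sFold_iff_pairs_minimal_general k n s i hi
end

section
/- Let n ≥ 2 and let R(P_n) = u_1,…,u_k be the rooted list of J(P_n). Let 1 < i < j ≤ k and suppose that some variable belonging to the colon ideal (u_1,…,u_{i−1}) : (u_i) divides u_j. Then either u_i u_j is not a minimal generator of J(P_n)^2, or u_i u_j is not the maximal 2-fold expression. -/
open MvPolynomial

namespace PathAux

/-- `S` covers every edge of the path `P_n`. -/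
def Cov (n : ℕ) (S : Finset ℕ) : Prop :=
  ∀ e : ℕ, 1 ≤ e → e + 1 ≤ n → e ∈ S ∨ e + 1 ∈ S

/-- Every vertex of `S` is needed. -/
def NeedAll (n : ℕ) (S : Finset ℕ) : Prop :=
  ∀ t ∈ S, ∃ e : ℕ, 1 ≤ e ∧ e + 1 ≤ n ∧
    ((e = t ∧ e + 1 ∉ S) ∨ (e + 1 = t ∧ e ∉ S))

/-- Binary encoding of a finite set of naturals. -/
def bv (S : Finset ℕ) : ℕ := ∑ x ∈ S, 2 ^ x

lemma Cov.mono {n : ℕ} {S T : Finset ℕ} (h : Cov n S) (hST : S ⊆ T) : Cov n T := by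
  intro e he hen
  rcases h e he hen with h' | h'
  · exact Or.inl (hST h')
  · exact Or.inr (hST h')

lemma sum_two_pow_lt {s : Finset ℕ} {γ : ℕ} (h : ∀ x ∈ s, x < γ) :
    ∑ x ∈ s, 2 ^ x < 2 ^ γ := by
  calc ∑ x ∈ s, 2 ^ x ≤ ∑ x ∈ Finset.range γ, 2 ^ x := by
        apply Finset.sum_le_sum_of_subset
        intro x hx
        exact Finset.mem_range.2 (h x hx)
    _ < 2 ^ γ := by
        have h2 : ∀ m : ℕ, ∑ x ∈ Finset.range m, 2 ^ x = 2 ^ m - 1 := by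
          intro m
          induction m with
          | zero => simp
          | succ m ih =>
            rw [Finset.sum_range_succ, ih]
            have : 1 ≤ 2 ^ m := Nat.one_le_two_pow
            have : (2:ℕ) ^ (m+1) = 2 ^ m * 2 := by ring
            omega
        have := h2 γ
        have : 1 ≤ 2 ^ γ := Nat.one_le_two_pow
        omega

lemma bv_lt_of_max {A I : Finset ℕ} {γ : ℕ} (hγI : γ ∈ I) (hγA : γ ∉ A)
    (h : ∀ x ∈ A, x ∉ I → x < γ) : bv A < bv I := by
  have hA : bv A = ∑ x ∈ A ∩ I, 2 ^ x + ∑ x ∈ A \ I, 2 ^ x :=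
    (Finset.sum_inter_add_sum_sdiff A I _).symm
  have hI' : (A ∩ I) ∪ {γ} ⊆ I := by
    intro x hx
    rcases Finset.mem_union.1 hx with hx | hx
    · exact (Finset.mem_inter.1 hx).2
    · simpa using Finset.mem_singleton.1 hx ▸ hγI
  have hdisj : Disjoint (A ∩ I) ({γ} : Finset ℕ) := by
    simp only [Finset.disjoint_singleton_right, Finset.mem_inter]
    exact fun h' => hγA h'.1
  have hIge : ∑ x ∈ A ∩ I, 2 ^ x + 2 ^ γ ≤ bv I := by
    have := Finset.sum_le_sum_of_subset (f := fun x => 2 ^ x) hI'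
    rwa [Finset.sum_union hdisj, Finset.sum_singleton] at this
  have hsmall : ∑ x ∈ A \ I, 2 ^ x < 2 ^ γ := by
    apply sum_two_pow_lt
    intro x hx
    have := Finset.mem_sdiff.1 hx
    exact h x this.1 this.2
  omega

lemma wit_of_bv_lt {S T : Finset ℕ} (h : bv S < bv T) :
    ∃ t, t ∈ T ∧ t ∉ S ∧ ∀ s, t < s → (s ∈ S ↔ s ∈ T) := by
  have hne : S ≠ T := by rintro rfl; exact lt_irrefl _ h
  have hsd : (symmDiff S T).Nonempty := by
    rw [Finset.nonempty_iff_ne_empty]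
    intro h0
    exact hne (Finset.symmDiff_eq_empty.mp h0)
  set t := (symmDiff S T).max' hsd with ht
  have htmem : t ∈ symmDiff S T := Finset.max'_mem _ _
  have htail : ∀ s, t < s → (s ∈ S ↔ s ∈ T) := by
    intro s hs
    by_cases hsS : s ∈ S <;> by_cases hsT : s ∈ T <;> try simp [hsS, hsT]
    · exfalso
      have : s ∈ symmDiff S T := by
        rw [Finset.mem_symmDiff]; exact Or.inl ⟨hsS, hsT⟩
      exact absurd (Finset.le_max' _ _ this) (not_le.2 hs)
    · exfalso
      have : s ∈ symmDiff S T := by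
        rw [Finset.mem_symmDiff]; exact Or.inr ⟨hsT, hsS⟩
      exact absurd (Finset.le_max' _ _ this) (not_le.2 hs)
  rw [Finset.mem_symmDiff] at htmem
  rcases htmem with ⟨htS, htT⟩ | ⟨htT, htS⟩
  · exfalso
    have : bv T < bv S := by
      apply bv_lt_of_max htS htT
      intro x hxT hxS
      by_contra hlt
      push_neg at hlt
      rcases lt_or_eq_of_le hlt with h' | h'
      · exact hxS ((htail x h').2 hxT)
      · exact htT (h' ▸ hxT)
    omega
  · exact ⟨t, htT, htS, htail⟩

lemma bv_mono {S T : Finset ℕ} (h : S ⊆ T) : bv S ≤ bv T :=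
  Finset.sum_le_sum_of_subset h

/-- The rooted list of minimal vertex covers of the path `P_n`. -/
def covList : ℕ → List (Finset ℕ)
  | 0 => [∅]
  | 1 => [∅]
  | 2 => [{1}, {2}]
  | 3 => [{2}, {1, 3}]
  | (n + 4) =>
      ((covList (n + 2)).map (insert (n + 3))) ++
      ((covList (n + 1)).map (fun S => insert (n + 4) (insert (n + 2) S)))

lemma covList_subset_Icc : ∀ n, ∀ S ∈ covList n, S ⊆ Finset.Icc 1 n := by
  intro n
  induction n using Nat.strong_induction_on with
  | _ n ih =>
    match n with
    | 0 => intro S hS; simp [covList] at hS; simp [hS]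
    | 1 => intro S hS; simp [covList] at hS; simp [hS]
    | 2 =>
      intro S hS
      simp [covList] at hS
      rcases hS with rfl | rfl <;> intro x hx <;> simp at hx <;> simp [hx] <;> omega
    | 3 =>
      intro S hS
      simp [covList] at hS
      rcases hS with rfl | rfl <;> intro x hx <;> simp at hx <;>
        rcases hx with rfl | rfl <;> simp <;> omega
    | (n + 4) =>
      intro S hS
      rw [covList, List.mem_append] at hS
      rcases hS with hS | hS
      · rw [List.mem_map] at hS
        obtain ⟨T, hT, rfl⟩ := hS
        have hT' := ih (n + 2) (by omega) T hT
        intro x hx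
        rcases Finset.mem_insert.1 hx with rfl | hx
        · simp
        · have := hT' hx; simp at this ⊢; omega
      · rw [List.mem_map] at hS
        obtain ⟨T, hT, rfl⟩ := hS
        have hT' := ih (n + 1) (by omega) T hT
        intro x hx
        rcases Finset.mem_insert.1 hx with rfl | hx
        · simp
        rcases Finset.mem_insert.1 hx with rfl | hx
        · simp
        · have := hT' hx; simp at this ⊢; omega

lemma covList_cov : ∀ n, ∀ S ∈ covList n, Cov n S := by
  intro n
  induction n using Nat.strong_induction_on with
  | _ n ih =>
    match n with
    | 0 => intro S hS e he hen; omega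
    | 1 => intro S hS e he hen; omega
    | 2 =>
      intro S hS e he hen
      simp [covList] at hS
      have : e = 1 := by omega
      subst this
      rcases hS with rfl | rfl <;> simp
    | 3 =>
      intro S hS e he hen
      simp [covList] at hS
      have : e = 1 ∨ e = 2 := by omega
      rcases hS with rfl | rfl <;> rcases this with rfl | rfl <;> simp
    | (n + 4) =>
      intro S hS e he hen
      rw [covList, List.mem_append] at hS
      rcases hS with hS | hS
      · rw [List.mem_map] at hS
        obtain ⟨T, hT, rfl⟩ := hS
        by_cases he2 : e + 1 ≤ n + 2
        · rcases ih (n + 2) (by omega) T hT e he he2 with h | h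
          · exact Or.inl (Finset.mem_insert_of_mem h)
          · exact Or.inr (Finset.mem_insert_of_mem h)
        · -- e = n+2 or e = n+3
          have : e = n + 2 ∨ e = n + 3 := by omega
          rcases this with rfl | rfl
          · exact Or.inr (Finset.mem_insert_self _ _)
          · exact Or.inl (Finset.mem_insert_self _ _)
      · rw [List.mem_map] at hS
        obtain ⟨T, hT, rfl⟩ := hS
        by_cases he2 : e + 1 ≤ n + 1
        · rcases ih (n + 1) (by omega) T hT e he he2 with h | h
          · exact Or.inl (Finset.mem_insert_of_mem (Finset.mem_insert_of_mem h))
          · exact Or.inr (Finset.mem_insert_of_mem (Finset.mem_insert_of_mem h))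
        · have : e = n + 1 ∨ e = n + 2 ∨ e = n + 3 := by omega
          rcases this with rfl | rfl | rfl
          · exact Or.inr (Finset.mem_insert_of_mem (Finset.mem_insert_self _ _))
          · exact Or.inl (Finset.mem_insert_of_mem (Finset.mem_insert_self _ _))
          · exact Or.inr (Finset.mem_insert_self _ _)

lemma covList_needAll : ∀ n, ∀ S ∈ covList n, NeedAll n S := by
  intro n
  induction n using Nat.strong_induction_on with
  | _ n ih =>
    match n with
    | 0 => intro S hS t ht; simp [covList] at hS; subst hS; simp at ht
    | 1 => intro S hS t ht; simp [covList] at hS; subst hS; simp at ht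
    | 2 =>
      intro S hS t ht
      simp [covList] at hS
      rcases hS with rfl | rfl <;> simp at ht <;> subst ht
      · exact ⟨1, by omega, by omega, Or.inl ⟨rfl, by decide⟩⟩
      · exact ⟨1, by omega, by omega, Or.inr ⟨rfl, by decide⟩⟩
    | 3 =>
      intro S hS t ht
      simp [covList] at hS
      rcases hS with rfl | rfl
      · simp at ht; subst ht
        exact ⟨2, by omega, by omega, Or.inl ⟨rfl, by decide⟩⟩
      · simp at ht
        rcases ht with rfl | rfl
        · exact ⟨1, by omega, by omega, Or.inl ⟨rfl, by decide⟩⟩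
        · exact ⟨2, by omega, by omega, Or.inr ⟨rfl, by decide⟩⟩
    | (n + 4) =>
      intro S hS t ht
      rw [covList, List.mem_append] at hS
      rcases hS with hS | hS
      · rw [List.mem_map] at hS
        obtain ⟨T, hT, rfl⟩ := hS
        have hTIcc := covList_subset_Icc (n + 2) T hT
        rcases Finset.mem_insert.1 ht with rfl | htT
        · refine ⟨n + 3, by omega, by omega, Or.inl ⟨rfl, ?_⟩⟩
          intro hc
          rcases Finset.mem_insert.1 hc with hc | hc
          · omega
          · have := hTIcc hc; simp only [Finset.mem_Icc] at this; omega
        · obtain ⟨e, he1, he2, hcase⟩ := ih (n + 2) (by omega) T hT t htT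
          refine ⟨e, he1, by omega, ?_⟩
          rcases hcase with ⟨rfl, hne⟩ | ⟨heq, hne⟩
          · refine Or.inl ⟨rfl, ?_⟩
            intro hc
            rcases Finset.mem_insert.1 hc with hc | hc
            · omega
            · exact hne hc
          · refine Or.inr ⟨heq, ?_⟩
            intro hc
            rcases Finset.mem_insert.1 hc with hc | hc
            · omega
            · exact hne hc
      · rw [List.mem_map] at hS
        obtain ⟨T, hT, rfl⟩ := hS
        have hTIcc := covList_subset_Icc (n + 1) T hT
        have hn3T : (n + 3) ∉ insert (n + 4) (insert (n + 2) T) := by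
          intro hc
          rcases Finset.mem_insert.1 hc with hc | hc
          · omega
          rcases Finset.mem_insert.1 hc with hc | hc
          · omega
          · have := hTIcc hc; simp only [Finset.mem_Icc] at this; omega
        rcases Finset.mem_insert.1 ht with rfl | ht'
        · exact ⟨n + 3, by omega, by omega, Or.inr ⟨rfl, hn3T⟩⟩
        rcases Finset.mem_insert.1 ht' with rfl | htT
        · exact ⟨n + 2, by omega, by omega, Or.inl ⟨rfl, hn3T⟩⟩
        · obtain ⟨e, he1, he2, hcase⟩ := ih (n + 1) (by omega) T hT t htT
          refine ⟨e, he1, by omega, ?_⟩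
          rcases hcase with ⟨rfl, hne⟩ | ⟨heq, hne⟩
          · refine Or.inl ⟨rfl, ?_⟩
            intro hc
            rcases Finset.mem_insert.1 hc with hc | hc
            · omega
            rcases Finset.mem_insert.1 hc with hc | hc
            · omega
            · exact hne hc
          · refine Or.inr ⟨heq, ?_⟩
            intro hc
            rcases Finset.mem_insert.1 hc with hc | hc
            · omega
            rcases Finset.mem_insert.1 hc with hc | hc
            · omega
            · exact hne hc

lemma covList_complete : ∀ n, ∀ T : Finset ℕ, Cov n T → ∃ S ∈ covList n, S ⊆ T := by
  intro n
  induction n using Nat.strong_induction_on with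
  | _ n ih =>
    match n with
    | 0 => intro T _; exact ⟨∅, by simp [covList], by simp⟩
    | 1 => intro T _; exact ⟨∅, by simp [covList], by simp⟩
    | 2 =>
      intro T hT
      rcases hT 1 (by omega) (by omega) with h | h
      · exact ⟨{1}, by simp [covList], by simp [h]⟩
      · exact ⟨{2}, by simp [covList], by simp [h]⟩
    | 3 =>
      intro T hT
      by_cases h2 : 2 ∈ T
      · exact ⟨{2}, by simp [covList], by simp [h2]⟩
      · have h1 : 1 ∈ T := by rcases hT 1 (by omega) (by omega) with h | h; exact h; exact absurd h h2
        have h3 : 3 ∈ T := by rcases hT 2 (by omega) (by omega) with h | h; exact absurd h h2; exact h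
        refine ⟨{1, 3}, by simp [covList], ?_⟩
        intro x hx; simp at hx; rcases hx with rfl | rfl <;> assumption
    | (n + 4) =>
      intro T hT
      by_cases h3 : n + 3 ∈ T
      · have : Cov (n + 2) T := fun e he hen => hT e he (by omega)
        obtain ⟨S, hS, hsub⟩ := ih (n + 2) (by omega) T this
        refine ⟨insert (n + 3) S, ?_, ?_⟩
        · rw [covList, List.mem_append]
          exact Or.inl (List.mem_map.2 ⟨S, hS, rfl⟩)
        · intro x hx
          rcases Finset.mem_insert.1 hx with rfl | hx
          · exact h3
          · exact hsub hx
      · have h4 : n + 4 ∈ T := by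
          rcases hT (n + 3) (by omega) (by omega) with h | h
          · exact absurd h h3
          · exact h
        have h2 : n + 2 ∈ T := by
          rcases hT (n + 2) (by omega) (by omega) with h | h
          · exact h
          · exact absurd h h3
        have : Cov (n + 1) T := fun e he hen => hT e he (by omega)
        obtain ⟨S, hS, hsub⟩ := ih (n + 1) (by omega) T this
        refine ⟨insert (n + 4) (insert (n + 2) S), ?_, ?_⟩
        · rw [covList, List.mem_append]
          exact Or.inr (List.mem_map.2 ⟨S, hS, rfl⟩)
        · intro x hx
          rcases Finset.mem_insert.1 hx with rfl | hx
          · exact h4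
          rcases Finset.mem_insert.1 hx with rfl | hx
          · exact h2
          · exact hsub hx

lemma bv_insert_of_notMem {a : ℕ} {S : Finset ℕ} (h : a ∉ S) :
    bv (insert a S) = 2 ^ a + bv S := Finset.sum_insert h

lemma bv_lt_two_pow {S : Finset ℕ} {m : ℕ} (h : S ⊆ Finset.Icc 1 m) : bv S < 2 ^ (m + 1) := by
  have h2 : ∀ k : ℕ, ∑ x ∈ Finset.range k, 2 ^ x = 2 ^ k - 1 := by
    intro k
    induction k with
    | zero => simp
    | succ k ihk =>
      rw [Finset.sum_range_succ, ihk]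
      have : 1 ≤ 2 ^ k := Nat.one_le_two_pow
      have : (2:ℕ) ^ (k+1) = 2 ^ k * 2 := by ring
      omega
  have : bv S ≤ ∑ x ∈ Finset.range (m + 1), 2 ^ x := by
    apply Finset.sum_le_sum_of_subset
    intro x hx
    have := h hx
    simp at this
    simp
    omega
  have := h2 (m + 1)
  have h1 : 1 ≤ (2:ℕ) ^ (m + 1) := Nat.one_le_two_pow
  omega

lemma covList_sorted : ∀ n, (covList n).Pairwise (fun S T => bv S < bv T) := by
  intro n
  induction n using Nat.strong_induction_on with
  | _ n ih =>
    match n with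
    | 0 => simp [covList]
    | 1 => simp [covList]
    | 2 => simp [covList, bv]
    | 3 =>
      simp [covList]
      show bv {2} < bv {1, 3}
      have : bv {2} = 4 := by simp [bv]
      have : bv ({1, 3} : Finset ℕ) = 2 + 8 := by
        rw [show ({1, 3} : Finset ℕ) = insert 1 {3} from rfl, bv_insert_of_notMem (by simp)]
        simp [bv]
      omega
    | (n + 4) =>
      rw [covList]
      refine List.pairwise_append.2 ⟨?_, ?_, ?_⟩
      · rw [List.pairwise_map]
        apply List.Pairwise.imp_of_mem ?_ (ih (n + 2) (by omega))
        intro S T hS hT h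
        have hSI := covList_subset_Icc _ _ hS
        have hTI := covList_subset_Icc _ _ hT
        have hSn : (n + 3) ∉ S := fun hc => by have := hSI hc; simp only [Finset.mem_Icc] at this; omega
        have hTn : (n + 3) ∉ T := fun hc => by have := hTI hc; simp only [Finset.mem_Icc] at this; omega
        rw [bv_insert_of_notMem hSn, bv_insert_of_notMem hTn]
        omega
      · rw [List.pairwise_map]
        apply List.Pairwise.imp_of_mem ?_ (ih (n + 1) (by omega))
        intro S T hS hT h
        have hSI := covList_subset_Icc _ _ hS
        have hTI := covList_subset_Icc _ _ hT
        have hS2 : (n + 2) ∉ S := fun hc => by have := hSI hc; simp only [Finset.mem_Icc] at this; omega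
        have hT2 : (n + 2) ∉ T := fun hc => by have := hTI hc; simp only [Finset.mem_Icc] at this; omega
        have hS4 : (n + 4) ∉ insert (n + 2) S := by
          intro hc
          rcases Finset.mem_insert.1 hc with hc | hc
          · omega
          · have := hSI hc; simp only [Finset.mem_Icc] at this; omega
        have hT4 : (n + 4) ∉ insert (n + 2) T := by
          intro hc
          rcases Finset.mem_insert.1 hc with hc | hc
          · omega
          · have := hTI hc; simp only [Finset.mem_Icc] at this; omega
        rw [bv_insert_of_notMem hS4, bv_insert_of_notMem hT4,
          bv_insert_of_notMem hS2, bv_insert_of_notMem hT2]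
        omega
      · intro S hS T hT
        rw [List.mem_map] at hS hT
        obtain ⟨S', hS', rfl⟩ := hS
        obtain ⟨T', hT', rfl⟩ := hT
        have hSI := covList_subset_Icc _ _ hS'
        have hTI := covList_subset_Icc _ _ hT'
        have hSn : (n + 3) ∉ S' := fun hc => by have := hSI hc; simp only [Finset.mem_Icc] at this; omega
        have hT2 : (n + 2) ∉ T' := fun hc => by have := hTI hc; simp only [Finset.mem_Icc] at this; omega
        have hT4 : (n + 4) ∉ insert (n + 2) T' := by
          intro hc
          rcases Finset.mem_insert.1 hc with hc | hc
          · omega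
          · have := hTI hc; simp only [Finset.mem_Icc] at this; omega
        rw [bv_insert_of_notMem hSn, bv_insert_of_notMem hT4]
        have h1 : bv S' < 2 ^ (n + 3) := by
          have h := bv_lt_two_pow hSI
          have e : n + 2 + 1 = n + 3 := by omega
          rwa [e] at h
        have : (2:ℕ) ^ (n + 3) + 2 ^ (n + 3) = 2 ^ (n + 4) := by ring
        omega

set_option maxHeartbeats 1000000 in
lemma key_up_core (n z m M1 : ℕ) (L I J : Finset ℕ)
    (hIcov : Cov n I) (hJcov : Cov n J) (hLcov : Cov n L)
    (hLI : ∀ x ∈ L, x ≠ z → x ∈ I) (hzL : z ∈ L) (hzJ : z ∈ J)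
    (hyL : ∀ y, y + 1 = z → y ∉ L)
    (hmM : m ≤ M1) (hM1 : M1 ≤ m + 1) (hM1pos : 0 < M1)
    (hOddM : ∀ k, k < M1 → z + 2*k + 1 ∈ L ∧ z + 2*k + 1 ∉ J ∧ z + 2*k + 1 ∈ I ∧ z + 2*k + 1 ≤ n)
    (hEvenJ : ∀ k, k < m → z + 2*k + 2 ∈ J ∧ z + 2*k + 2 ≤ n)
    (hlast : M1 = m + 1 → n < z + 2*m + 2)
    (hterm : M1 = m → z + 2*m ∉ I → z + 2*m + 1 ≤ n → z + 2*m + 1 ∈ L → z + 2*m + 1 ∈ J)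
    (γ : ℕ) (hγI : γ ∈ I)
    (hγform : (∃ k, k < M1 ∧ γ = z + 2*k + 1) ∨ (γ ∉ L ∧ ∀ k, k < m → γ ≠ z + 2*k + 2))
    (hγb : ∀ x, (x = z ∨ (∃ k, k < m ∧ x = z + 2*k + 2 ∧ x ∉ I)) → x < γ) :
    ∃ A : Finset ℕ, Cov n A ∧ (∀ x ∈ A, x ∈ I ∨ x ∈ J) ∧
      Cov n ((I ∩ J) ∪ ((I ∪ J) \ A)) ∧ bv A < bv I := by
  classical
  set A : Finset ℕ := (L.filter (fun x => ∀ k, k < M1 → x ≠ z + 2*k + 1)) ∪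
      (Finset.range m).image (fun k => z + 2*k + 2) with hA
  have memA : ∀ x, x ∈ A ↔
      ((x ∈ L ∧ ∀ k, k < M1 → x ≠ z + 2*k + 1) ∨ ∃ k, k < m ∧ z + 2*k + 2 = x) := by
    intro x
    simp [hA, Finset.mem_union, Finset.mem_filter, Finset.mem_image, Finset.mem_range]
  have hzA : z ∈ A := by
    rw [memA]
    exact Or.inl ⟨hzL, fun k hk => by omega⟩
  refine ⟨A, ?_, ?_, ?_, ?_⟩
  · -- Cov n A
    intro e he1 he2
    rcases hLcov e he1 he2 with htL | htL
    · by_cases htA : e ∈ A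
      · exact Or.inl htA
      · right
        have : ∃ k, k < M1 ∧ e = z + 2*k + 1 := by
          by_contra hc
          push_neg at hc
          exact htA ((memA e).2 (Or.inl ⟨htL, fun k hk => hc k hk⟩))
        obtain ⟨k, hk, rfl⟩ := this
        by_cases hkm : k < m
        · exact (memA _).2 (Or.inr ⟨k, hkm, by omega⟩)
        · exfalso
          have hM1eq : M1 = m + 1 := by omega
          have := hlast hM1eq
          omega
    · by_cases htA : e + 1 ∈ A
      · exact Or.inr htA
      · left
        have : ∃ k, k < M1 ∧ e + 1 = z + 2*k + 1 := by
          by_contra hc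
          push_neg at hc
          exact htA ((memA _).2 (Or.inl ⟨htL, fun k hk => hc k hk⟩))
        obtain ⟨k, hk, hke⟩ := this
        by_cases hk0 : k = 0
        · subst hk0
          have : e = z := by omega
          rw [this]; exact hzA
        · have hkm : k - 1 < m := by omega
          exact (memA _).2 (Or.inr ⟨k - 1, hkm, by omega⟩)
  · -- A ⊆ I ∪ J
    intro x hx
    rcases (memA x).1 hx with ⟨hxL, _⟩ | ⟨k, hk, rfl⟩
    · by_cases hxz : x = z
      · exact Or.inr (hxz ▸ hzJ)
      · exact Or.inl (hLI x hxL hxz)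
    · exact Or.inr (hEvenJ k hk).1
  · -- Cov n B
    have memB : ∀ x, x ∈ (I ∩ J) ∪ ((I ∪ J) \ A) ↔
        ((x ∈ I ∧ x ∈ J) ∨ ((x ∈ I ∨ x ∈ J) ∧ x ∉ A)) := by
      intro x
      simp only [Finset.mem_union, Finset.mem_inter, Finset.mem_sdiff]
    intro e he1 he2
    -- helper: the odd chain points are in I and not in A
    have hOddB : ∀ k, k < M1 → z + 2*k + 1 ∈ (I ∩ J) ∪ ((I ∪ J) \ A) := by
      intro k hk
      rw [memB]
      refine Or.inr ⟨Or.inl (hOddM k hk).2.2.1, ?_⟩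
      rw [memA]
      rintro (⟨-, hno⟩ | ⟨k', hk', heq⟩)
      · exact hno k hk rfl
      · omega
    rcases hJcov e he1 he2 with htJ | htJ
    · -- e ∈ J
      by_cases htI : e ∈ I
      · exact Or.inl ((memB e).2 (Or.inl ⟨htI, htJ⟩))
      by_cases htA : e ∈ A
      · -- e ∈ A, e ∉ I, e ∈ J : e = z, or e is an even chain point not in I
        rcases (memA e).1 htA with ⟨heL, -⟩ | ⟨k, hk, hke⟩
        · by_cases hez : e = z
          · -- neighbor y = z + 1
            subst hez
            right
            have h0 := hOddB 0 hM1pos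
            have : e + 1 = e + 2*0 + 1 := by ring
            rw [this]; exact h0
          · exact absurd (hLI e heL hez) htI
        · -- e = z + 2k + 2, neighbor e+1 = z + 2(k+1)+1
          right
          by_cases hk1 : k + 1 < M1
          · have := hOddB (k + 1) hk1
            have heq : e + 1 = z + 2*(k+1) + 1 := by omega
            rw [heq]; exact this
          · -- k + 1 = M1 = m
            have hMm : M1 = m ∧ k + 1 = m := by omega
            have hteI : z + 2*m ∉ I := by
              have : e = z + 2*m := by omega
              rwa [this] at htI
            have hy : e + 1 = z + 2*m + 1 := by omega
            by_cases hyL' : e + 1 ∈ L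
            · have hyJ : e + 1 ∈ J := by
                rw [hy]; exact hterm hMm.1 hteI (by omega) (by rwa [hy] at hyL')
              have hyI : e + 1 ∈ I := hLI _ hyL' (by omega)
              exact (memB _).2 (Or.inl ⟨hyI, hyJ⟩)
            · have hyI : e + 1 ∈ I := by
                rcases hIcov e he1 he2 with h | h
                · exact absurd h htI
                · exact h
              refine (memB _).2 (Or.inr ⟨Or.inl hyI, ?_⟩)
              rw [memA]
              rintro (⟨hc, -⟩ | ⟨k', hk', heq⟩)
              · exact hyL' hc
              · omega
      · exact Or.inl ((memB e).2 (Or.inr ⟨Or.inr htJ, htA⟩))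
    · -- e + 1 ∈ J
      by_cases htI : e + 1 ∈ I
      · exact Or.inr ((memB _).2 (Or.inl ⟨htI, htJ⟩))
      by_cases htA : e + 1 ∈ A
      · rcases (memA _).1 htA with ⟨heL, -⟩ | ⟨k, hk, hke⟩
        · by_cases hez : e + 1 = z
          · -- neighbor y = e = z - 1, y ∉ L
            left
            have hyI : e ∈ I := by
              rcases hIcov e he1 he2 with h | h
              · exact h
              · exact absurd (hez ▸ h) (hez ▸ htI)
            refine (memB e).2 (Or.inr ⟨Or.inl hyI, ?_⟩)
            rw [memA]
            rintro (⟨hc, -⟩ | ⟨k', hk', heq⟩)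
            · exact hyL e hez hc
            · omega
          · exact absurd (hLI _ heL hez) htI
        · -- e + 1 = z + 2k + 2, neighbor e = z + 2k + 1
          left
          have := hOddB k (by omega)
          have heq : e = z + 2*k + 1 := by omega
          rw [heq]; exact this
      · exact Or.inr ((memB _).2 (Or.inr ⟨Or.inr htJ, htA⟩))
  · -- bv A < bv I
    have hγA : γ ∉ A := by
      rw [memA]
      rcases hγform with ⟨k, hk, rfl⟩ | ⟨hγL, hγe⟩
      · rintro (⟨-, hno⟩ | ⟨k', hk', heq⟩)
        · exact hno k hk rfl
        · omega
      · rintro (⟨hc, -⟩ | ⟨k', hk', heq⟩)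
        · exact hγL hc
        · exact hγe k' hk' heq.symm
    apply bv_lt_of_max hγI hγA
    intro x hxA hxI
    rcases (memA x).1 hxA with ⟨hxL, -⟩ | ⟨k, hk, hke⟩
    · by_cases hxz : x = z
      · exact hγb x (Or.inl hxz)
      · exact absurd (hLI x hxL hxz) hxI
    · exact hγb x (Or.inr ⟨k, hk, hke.symm, hxI⟩)

set_option maxHeartbeats 1000000 in
lemma key_down_core (n z m M1 : ℕ) (L I J : Finset ℕ)
    (hIcov : Cov n I) (hJcov : Cov n J) (hLcov : Cov n L)
    (hLI : ∀ x ∈ L, x ≠ z → x ∈ I) (hzL : z ∈ L) (hzJ : z ∈ J)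
    (hyR : z + 1 ∉ L)
    (hmM : m ≤ M1) (hM1 : M1 ≤ m + 1) (hM1pos : 0 < M1)
    (hOddM : ∀ k, k < M1 → z - (2*k + 1) ∈ L ∧ z - (2*k + 1) ∉ J ∧ z - (2*k + 1) ∈ I ∧ 2*k + 2 ≤ z)
    (hEvenJ : ∀ k, k < m → z - (2*k + 2) ∈ J ∧ 2*k + 3 ≤ z)
    (hlast : M1 = m + 1 → z = 2*m + 2)
    (hterm : M1 = m → z - 2*m ∉ I → 2*m + 2 ≤ z → z - (2*m + 1) ∈ L → z - (2*m + 1) ∈ J)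
    (γ : ℕ) (hγI : γ ∈ I) (hγL : γ ∉ L) (hγgt : z < γ) :
    ∃ A : Finset ℕ, Cov n A ∧ (∀ x ∈ A, x ∈ I ∨ x ∈ J) ∧
      Cov n ((I ∩ J) ∪ ((I ∪ J) \ A)) ∧ bv A < bv I := by
  classical
  set A : Finset ℕ := (L.filter (fun x => ∀ k, k < M1 → x ≠ z - (2*k + 1))) ∪
      (Finset.range m).image (fun k => z - (2*k + 2)) with hA
  have memA : ∀ x, x ∈ A ↔
      ((x ∈ L ∧ ∀ k, k < M1 → x ≠ z - (2*k + 1)) ∨ ∃ k, k < m ∧ z - (2*k + 2) = x) := by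
    intro x
    simp [hA, Finset.mem_union, Finset.mem_filter, Finset.mem_image, Finset.mem_range]
  have hzA : z ∈ A := by
    rw [memA]
    refine Or.inl ⟨hzL, fun k hk hcon => ?_⟩
    have := (hOddM k hk).2.2.2
    omega
  refine ⟨A, ?_, ?_, ?_, ?_⟩
  · -- Cov n A
    intro e he1 he2
    rcases hLcov e he1 he2 with htL | htL
    · by_cases htA : e ∈ A
      · exact Or.inl htA
      · right
        have : ∃ k, k < M1 ∧ e = z - (2*k + 1) := by
          by_contra hc
          push_neg at hc
          exact htA ((memA e).2 (Or.inl ⟨htL, fun k hk => hc k hk⟩))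
        obtain ⟨k, hk, hke⟩ := this
        have hbz := (hOddM k hk).2.2.2
        by_cases hkm : k < m
        ·
          by_cases hk0 : k = 0
          · have : e + 1 = z := by omega
            rw [this]; exact hzA
          · refine (memA _).2 (Or.inr ⟨k - 1, by omega, ?_⟩)
            have := (hEvenJ (k-1) (by omega)).2
            omega
        · by_cases hk0 : k = 0
          · have : e + 1 = z := by omega
            rw [this]; exact hzA
          · refine (memA _).2 (Or.inr ⟨k - 1, by omega, ?_⟩)
            omega
    · by_cases htA : e + 1 ∈ A
      · exact Or.inr htA
      · left
        have : ∃ k, k < M1 ∧ e + 1 = z - (2*k + 1) := by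
          by_contra hc
          push_neg at hc
          exact htA ((memA _).2 (Or.inl ⟨htL, fun k hk => hc k hk⟩))
        obtain ⟨k, hk, hke⟩ := this
        have hbz := (hOddM k hk).2.2.2
        -- e = z - (2k+2)
        by_cases hkm : k < m
        · exact (memA _).2 (Or.inr ⟨k, hkm, by omega⟩)
        · exfalso
          have hM1eq : M1 = m + 1 := by omega
          have := hlast hM1eq
          omega
  · -- A ⊆ I ∪ J
    intro x hx
    rcases (memA x).1 hx with ⟨hxL, _⟩ | ⟨k, hk, hke⟩
    · by_cases hxz : x = z
      · exact Or.inr (hxz ▸ hzJ)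
      · exact Or.inl (hLI x hxL hxz)
    · exact Or.inr (hke ▸ (hEvenJ k hk).1)
  · -- Cov n B
    have memB : ∀ x, x ∈ (I ∩ J) ∪ ((I ∪ J) \ A) ↔
        ((x ∈ I ∧ x ∈ J) ∨ ((x ∈ I ∨ x ∈ J) ∧ x ∉ A)) := by
      intro x
      simp only [Finset.mem_union, Finset.mem_inter, Finset.mem_sdiff]
    intro e he1 he2
    have hOddB : ∀ k, k < M1 → z - (2*k + 1) ∈ (I ∩ J) ∪ ((I ∪ J) \ A) := by
      intro k hk
      rw [memB]
      refine Or.inr ⟨Or.inl (hOddM k hk).2.2.1, ?_⟩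
      rw [memA]
      rintro (⟨-, hno⟩ | ⟨k', hk', heq⟩)
      · exact hno k hk rfl
      · have h1 := (hOddM k hk).2.2.2
        have h2 := (hEvenJ k' hk').2
        omega
    rcases hJcov e he1 he2 with htJ | htJ
    · -- e ∈ J; e could be z (neighbor e+1 = z+1 ∉ L) or even pt (neighbor e+1 = odd pt z-(2k+1))
      by_cases htI : e ∈ I
      · exact Or.inl ((memB e).2 (Or.inl ⟨htI, htJ⟩))
      by_cases htA : e ∈ A
      · rcases (memA e).1 htA with ⟨heL, -⟩ | ⟨k, hk, hke⟩
        · by_cases hez : e = z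
          · -- neighbor y = z+1 : in I (since z ∉ I), not in L, not an even pt
            subst hez
            right
            have hyI : e + 1 ∈ I := by
              rcases hIcov e he1 he2 with h | h
              · exact absurd h htI
              · exact h
            refine (memB _).2 (Or.inr ⟨Or.inl hyI, ?_⟩)
            rw [memA]
            rintro (⟨hc, -⟩ | ⟨k', hk', heq⟩)
            · exact hyR hc
            · have := (hEvenJ k' hk').2
              omega
          · exact absurd (hLI e heL hez) htI
        · -- e = z - (2k+2); neighbor e+1 = z - (2k+1)
          right
          have := hOddB k (by omega)
          have hb := (hEvenJ k hk).2
          have heq : e + 1 = z - (2*k + 1) := by omega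
          rw [heq]; exact this
      · exact Or.inl ((memB e).2 (Or.inr ⟨Or.inr htJ, htA⟩))
    · -- e + 1 ∈ J
      by_cases htI : e + 1 ∈ I
      · exact Or.inr ((memB _).2 (Or.inl ⟨htI, htJ⟩))
      by_cases htA : e + 1 ∈ A
      · rcases (memA _).1 htA with ⟨heL, -⟩ | ⟨k, hk, hke⟩
        · by_cases hez : e + 1 = z
          · -- neighbor y = e = z-1 = z-(2*0+1), odd pt
            left
            have := hOddB 0 hM1pos
            have hb := (hOddM 0 hM1pos).2.2.2
            have heq : e = z - (2*0 + 1) := by omega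
            rw [heq]; exact this
          · exact absurd (hLI _ heL hez) htI
        · -- e + 1 = z - (2k+2); neighbor y = e = z - (2k+3) = z - (2(k+1)+1)
          left
          have hb := (hEvenJ k hk).2
          by_cases hk1 : k + 1 < M1
          · have := hOddB (k + 1) hk1
            have hb2 := (hOddM (k+1) hk1).2.2.2
            have heq : e = z - (2*(k+1) + 1) := by omega
            rw [heq]; exact this
          · -- k + 1 = M1 = m ; e = z - (2m+1), e+1 = z-2m ∉ I
            have hMm : M1 = m ∧ k + 1 = m := by omega
            have hteI : z - 2*m ∉ I := by
              have : e + 1 = z - 2*m := by omega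
              rwa [this] at htI
            have hzb : 2*m + 2 ≤ z := by omega
            have hy : e = z - (2*m + 1) := by omega
            by_cases hyL' : e ∈ L
            · have hyJ : e ∈ J := by
                rw [hy]; exact hterm hMm.1 hteI hzb (by rwa [hy] at hyL')
              have hyI : e ∈ I := hLI _ hyL' (by omega)
              exact (memB _).2 (Or.inl ⟨hyI, hyJ⟩)
            · have hyI : e ∈ I := by
                rcases hIcov e he1 he2 with h | h
                · exact h
                · exact absurd h htI
              refine (memB _).2 (Or.inr ⟨Or.inl hyI, ?_⟩)
              rw [memA]
              rintro (⟨hc, -⟩ | ⟨k', hk', heq⟩)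
              · exact hyL' hc
              · have := (hEvenJ k' hk').2
                omega
      · exact Or.inr ((memB _).2 (Or.inr ⟨Or.inr htJ, htA⟩))
  · -- bv A < bv I
    have hγA : γ ∉ A := by
      rw [memA]
      rintro (⟨hc, -⟩ | ⟨k', hk', heq⟩)
      · exact hγL hc
      · have := (hEvenJ k' hk').2
        omega
    apply bv_lt_of_max hγI hγA
    intro x hxA hxI
    rcases (memA x).1 hxA with ⟨hxL, -⟩ | ⟨k, hk, hke⟩
    · by_cases hxz : x = z
      · omega
      · exact absurd (hLI x hxL hxz) hxI
    · have := (hEvenJ k hk).2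
      omega

/-- The main combinatorial lemma. -/
lemma key_main (n z : ℕ) (L I J : Finset ℕ)
    (hLn : L ⊆ Finset.Icc 1 n) (hIn : I ⊆ Finset.Icc 1 n)
    (hLcov : Cov n L) (hIcov : Cov n I) (hJcov : Cov n J)
    (hmin : NeedAll n L)
    (hLI : ∀ x ∈ L, x ≠ z → x ∈ I) (hzL : z ∈ L) (hzI : z ∉ I) (hzJ : z ∈ J)
    (hbv : bv L < bv I) :
    ∃ A : Finset ℕ, Cov n A ∧ (∀ x ∈ A, x ∈ I ∨ x ∈ J) ∧
      Cov n ((I ∩ J) ∪ ((I ∪ J) \ A)) ∧ bv A < bv I := by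
  classical
  have hzn : 1 ≤ z ∧ z ≤ n := by have := hLn hzL; simpa using this
  -- the witness from bv L < bv I
  obtain ⟨w, hwI, hwL, hwtail⟩ := wit_of_bv_lt hbv
  have hwz : z < w := by
    rcases lt_trichotomy w z with h | h | h
    · exact absurd ((hwtail z h).1 hzL) hzI
    · exact absurd (h ▸ hwI) (h ▸ hzI)
    · exact h
  by_cases hbad : (z + 1 ≤ n ∧ z + 1 ∈ L ∧ z + 1 ∉ J) ∨ (2 ≤ z ∧ z - 1 ∈ L ∧ z - 1 ∉ J)
  swap
  · -- no bad neighbor : A = L works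
    push_neg at hbad
    refine ⟨L, hLcov, ?_, ?_, hbv⟩
    · intro x hx
      by_cases hxz : x = z
      · exact Or.inr (hxz ▸ hzJ)
      · exact Or.inl (hLI x hx hxz)
    · have memB : ∀ x, x ∈ (I ∩ J) ∪ ((I ∪ J) \ L) ↔
          ((x ∈ I ∧ x ∈ J) ∨ ((x ∈ I ∨ x ∈ J) ∧ x ∉ L)) := by
        intro x
        simp only [Finset.mem_union, Finset.mem_inter, Finset.mem_sdiff]
      intro e he1 he2
      rcases hJcov e he1 he2 with htJ | htJ
      · by_cases htI : e ∈ I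
        · exact Or.inl ((memB e).2 (Or.inl ⟨htI, htJ⟩))
        by_cases htL : e ∈ L
        · -- e ∈ L, e ∉ I → e = z ; neighbor e+1
          have hez : e = z := by
            by_contra hc
            exact htI (hLI e htL hc)
          subst hez
          right
          have hyI : e + 1 ∈ I := by
            rcases hIcov e he1 he2 with h | h
            · exact absurd h htI
            · exact h
          have hyL : e + 1 ∉ L ∨ e + 1 ∈ J := by
            by_cases hL : e + 1 ∈ L
            · exact Or.inr (hbad.1 he2 hL)
            · exact Or.inl hL
          rcases hyL with h | h
          · exact (memB _).2 (Or.inr ⟨Or.inl hyI, h⟩)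
          · exact (memB _).2 (Or.inl ⟨hyI, h⟩)
        · exact Or.inl ((memB e).2 (Or.inr ⟨Or.inr htJ, htL⟩))
      · by_cases htI : e + 1 ∈ I
        · exact Or.inr ((memB _).2 (Or.inl ⟨htI, htJ⟩))
        by_cases htL : e + 1 ∈ L
        · have hez : e + 1 = z := by
            by_contra hc
            exact htI (hLI _ htL hc)
          left
          have hyI : e ∈ I := by
            rcases hIcov e he1 he2 with h | h
            · exact h
            · exact absurd h htI
          have hyL : e ∉ L ∨ e ∈ J := by
            have hez' : e = z - 1 := by omega
            by_cases hL : e ∈ L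
            · refine Or.inr ?_
              have := hbad.2 (by omega) (by rwa [hez'] at hL)
              rwa [hez']
            · exact Or.inl hL
          rcases hyL with h | h
          · exact (memB _).2 (Or.inr ⟨Or.inl hyI, h⟩)
          · exact (memB _).2 (Or.inl ⟨hyI, h⟩)
        · exact Or.inr ((memB _).2 (Or.inr ⟨Or.inr htJ, htL⟩))
  -- bad neighbor exists
  have huniq : ¬ ((z + 1 ∈ L) ∧ (2 ≤ z ∧ z - 1 ∈ L)) := by
    rintro ⟨h1, h2, h3⟩
    obtain ⟨e, he1, he2, hc⟩ := hmin z hzL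
    rcases hc with ⟨rfl, hne⟩ | ⟨heq, hne⟩
    · exact hne h1
    · have : e = z - 1 := by omega
      exact hne (this ▸ h3)
  rcases hbad with ⟨hon, hoL, hoJ⟩ | ⟨hoz, hoL, hoJ⟩
  · -- UP case
    have hyL : ∀ y, y + 1 = z → y ∉ L := by
      intro y hyz hyL'
      have hy1 : 1 ≤ y ∧ y ≤ n := by have := hLn hyL'; simpa using this
      refine huniq ⟨hoL, by omega, ?_⟩
      have hzy : z - 1 = y := by omega
      rwa [hzy]
    set Pm : ℕ → Prop := fun m => z + 2*m + 2 ≤ n ∧ z + 2*m + 1 ∈ L ∧ z + 2*m + 1 ∉ J ∧ z + 2*m ∉ I with hPm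
    have hex : ∃ m, ¬ Pm m := ⟨n, fun h => by have := h.1; omega⟩
    set m := Nat.find hex with hmdef
    have hP : ∀ k, k < m → Pm k := fun k hk => not_not.1 (Nat.find_min hex hk)
    have hnP : ¬ Pm m := Nat.find_spec hex
    -- all even chain points (index ≤ m) outside I, under extra assumption for index m
    have hEvI : ∀ k, k < m → z + 2*k ∉ I := by
      intro k hk
      exact (hP k hk).2.2.2
    have hEvenJ : ∀ k, k < m → z + 2*k + 2 ∈ J ∧ z + 2*k + 2 ≤ n := by
      intro k hk
      obtain ⟨h1, h2, h3, h4⟩ := hP k hk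
      constructor
      · rcases hJcov (z + 2*k + 1) (by omega) h1 with h | h
        · exact absurd h h3
        · exact h
      · exact h1
    by_cases hdead : z + 2*m + 1 ≤ n ∧ z + 2*m + 1 ∈ L ∧ z + 2*m + 1 ∉ J ∧ z + 2*m ∉ I
    · -- dead-end termination: M1 = m + 1, γ = z + 2m + 1
      obtain ⟨hd1, hd2, hd3, hd4⟩ := hdead
      have hOddM : ∀ k, k < m + 1 → z + 2*k + 1 ∈ L ∧ z + 2*k + 1 ∉ J ∧ z + 2*k + 1 ∈ I ∧ z + 2*k + 1 ≤ n := by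
        intro k hk
        by_cases hkm : k < m
        · obtain ⟨h1, h2, h3, h4⟩ := hP k hkm
          exact ⟨h2, h3, hLI _ h2 (by omega), by omega⟩
        · have hkm' : k = m := by omega
          subst hkm'
          exact ⟨hd2, hd3, hLI _ hd2 (by omega), hd1⟩
      refine key_up_core n z m (m+1) L I J hIcov hJcov hLcov hLI hzL hzJ hyL
        (by omega) (by omega) (by omega) hOddM hEvenJ
        (fun _ => by
          by_contra hc
          push_neg at hc
          exact hnP ⟨by omega, hd2, hd3, hd4⟩)
        (fun h => by omega)
        (z + 2*m + 1) (hOddM m (by omega)).2.2.1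
        (Or.inl ⟨m, by omega, rfl⟩) ?_
      rintro x (rfl | ⟨k, hk, rfl, -⟩) <;> omega
    · -- normal termination: M1 = m
      have hm1 : 0 < m := by
        rcases Nat.eq_zero_or_pos m with h0 | h
        · exfalso
          apply hdead
          rw [h0]
          have := hnP
          rw [h0] at this
          simp only [hPm] at this
          push_neg at this
          refine ⟨?_, by simpa using hoL, by simpa using hoJ, by simpa using hzI⟩
          · -- z + 1 ≤ n
            simpa using hon
        · exact h
      have hOddM : ∀ k, k < m → z + 2*k + 1 ∈ L ∧ z + 2*k + 1 ∉ J ∧ z + 2*k + 1 ∈ I ∧ z + 2*k + 1 ≤ n := by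
        intro k hk
        obtain ⟨h1, h2, h3, h4⟩ := hP k hk
        exact ⟨h2, h3, hLI _ h2 (by omega), by omega⟩
      have hterm : z + 2*m ∉ I → z + 2*m + 1 ≤ n → z + 2*m + 1 ∈ L → z + 2*m + 1 ∈ J := by
        intro h1 h2 h3
        by_contra hc
        exact hdead ⟨h2, h3, hc, h1⟩
      -- choose γ
      by_cases hI2m : z + 2*m ∈ I
      · -- γ = z + 2(m-1) + 1
        refine key_up_core n z m m L I J hIcov hJcov hLcov hLI hzL hzJ hyL
          (le_refl m) (by omega) hm1 hOddM hEvenJ (fun h => by omega)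
          (fun _ => hterm)
          (z + 2*(m-1) + 1) (hOddM (m-1) (by omega)).2.2.1
          (Or.inl ⟨m-1, by omega, rfl⟩) ?_
        rintro x (rfl | ⟨k, hk, rfl, hkI⟩)
        · omega
        · -- x = z + 2k + 2 ∉ I, k < m ; if k = m - 1 then x = z + 2m ∈ I contra
          by_cases hkm : k = m - 1
          · exfalso
            apply hkI
            have : z + 2*k + 2 = z + 2*m := by omega
            rw [this]; exact hI2m
          · omega
      · -- γ = w, need w > z + 2m
        have hwgt : z + 2*m < w := by
          by_contra hc
          push_neg at hc
          -- w ∈ (z, z+2m]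
          have hwrange : z < w ∧ w ≤ z + 2*m := ⟨hwz, hc⟩
          -- w = z + r, 1 ≤ r ≤ 2m
          obtain ⟨r, hr1, hr2, hrw⟩ : ∃ r, 1 ≤ r ∧ r ≤ 2*m ∧ w = z + r := ⟨w - z, by omega, by omega, by omega⟩
          rcases Nat.even_or_odd r with ⟨j, hj⟩ | ⟨j, hj⟩
          · -- w = z + 2j, 1 ≤ j ≤ m : not in I
            have hj1 : 1 ≤ j ∧ j ≤ m := by omega
            by_cases hjm : j = m
            · exact hI2m (by rw [show z + 2*m = w by omega]; exact hwI)
            · exact hEvI j (by omega) (by rw [show z + 2*j = w by omega]; exact hwI)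
          · -- w = z + 2j + 1, j < m : in L, contra w ∉ L
            have : z + 2*j + 1 ∈ L := (hOddM j (by omega)).1
            exact hwL (by rwa [show z + 2*j + 1 = w by omega] at this)
        refine key_up_core n z m m L I J hIcov hJcov hLcov hLI hzL hzJ hyL
          (le_refl m) (by omega) hm1 hOddM hEvenJ (fun h => by omega)
          (fun _ => hterm)
          w hwI (Or.inr ⟨hwL, fun k hk => by omega⟩) ?_
        rintro x (rfl | ⟨k, hk, rfl, -⟩) <;> omega
  · -- DOWN case
    have hyR : z + 1 ∉ L := by
      intro hc
      exact huniq ⟨hc, hoz, hoL⟩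
    set Pm : ℕ → Prop := fun m => 2*m + 3 ≤ z ∧ z - (2*m + 1) ∈ L ∧ z - (2*m + 1) ∉ J ∧ z - 2*m ∉ I with hPm
    have hex : ∃ m, ¬ Pm m := ⟨z, fun h => by have := h.1; omega⟩
    set m := Nat.find hex with hmdef
    have hP : ∀ k, k < m → Pm k := fun k hk => not_not.1 (Nat.find_min hex hk)
    have hnP : ¬ Pm m := Nat.find_spec hex
    have hEvenJ : ∀ k, k < m → z - (2*k + 2) ∈ J ∧ 2*k + 3 ≤ z := by
      intro k hk
      obtain ⟨h1, h2, h3, h4⟩ := hP k hk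
      constructor
      · rcases hJcov (z - (2*k + 2)) (by omega) (by omega) with h | h
        · exact h
        · rw [show z - (2*k+2) + 1 = z - (2*k+1) by omega] at h
          exact absurd h h3
      · exact h1
    by_cases hdead : 2*m + 2 ≤ z ∧ z - (2*m + 1) ∈ L ∧ z - (2*m + 1) ∉ J ∧ z - 2*m ∉ I
    · obtain ⟨hd1, hd2, hd3, hd4⟩ := hdead
      have hOddM : ∀ k, k < m + 1 → z - (2*k + 1) ∈ L ∧ z - (2*k + 1) ∉ J ∧ z - (2*k + 1) ∈ I ∧ 2*k + 2 ≤ z := by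
        intro k hk
        by_cases hkm : k < m
        · obtain ⟨h1, h2, h3, h4⟩ := hP k hkm
          exact ⟨h2, h3, hLI _ h2 (by omega), by omega⟩
        · have hkm' : k = m := by omega
          subst hkm'
          exact ⟨hd2, hd3, hLI _ hd2 (by omega), hd1⟩
      refine key_down_core n z m (m+1) L I J hIcov hJcov hLcov hLI hzL hzJ hyR
        (by omega) (by omega) (by omega) hOddM hEvenJ
        (fun _ => by
          by_contra hc
          exact hnP ⟨by omega, hd2, hd3, hd4⟩)
        (fun h => by omega)
        w hwI hwL hwz
    · have hm1 : 0 < m := by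
        rcases Nat.eq_zero_or_pos m with h0 | h
        · exfalso
          apply hdead
          rw [h0]
          have hnP0 := hnP
          rw [h0] at hnP0
          simp only [hPm] at hnP0
          push_neg at hnP0
          refine ⟨by omega, ?_, ?_, by simpa using hzI⟩
          · simpa [show 2*0+1 = 1 from rfl] using hoL
          · simpa [show 2*0+1 = 1 from rfl] using hoJ
        · exact h
      have hOddM : ∀ k, k < m → z - (2*k + 1) ∈ L ∧ z - (2*k + 1) ∉ J ∧ z - (2*k + 1) ∈ I ∧ 2*k + 2 ≤ z := by
        intro k hk
        obtain ⟨h1, h2, h3, h4⟩ := hP k hk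
        exact ⟨h2, h3, hLI _ h2 (by omega), by omega⟩
      refine key_down_core n z m m L I J hIcov hJcov hLcov hLI hzL hzJ hyR
        (le_refl m) (by omega) hm1 hOddM hEvenJ (fun h => by omega)
        (fun _ h1 h2 h3 => by
          by_contra hc
          exact hdead ⟨h2, h3, hc, h1⟩)
        w hwI hwL hwz

noncomputable section
variable {k : Type*} [Field k]

/-- The indicator exponent vector of a finite set. -/
def vind (S : Finset ℕ) : ℕ →₀ ℕ := ∑ t ∈ S, Finsupp.single t 1

/-- The squarefree monomial with support `S`. -/
def mprod (S : Finset ℕ) : MvPolynomial ℕ k := ∏ t ∈ S, X t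

lemma vind_apply (S : Finset ℕ) (x : ℕ) : vind S x = if x ∈ S then 1 else 0 := by
  rw [vind, Finsupp.finset_sum_apply]
  simp only [Finsupp.single_apply]
  rw [Finset.sum_ite_eq' S x (fun _ => 1)]

lemma mprod_eq (S : Finset ℕ) : (mprod S : MvPolynomial ℕ k) = monomial (vind S) 1 := by
  classical
  induction S using Finset.induction_on with
  | empty => simp [mprod, vind]
  | @insert a S ha ih =>
    rw [mprod, Finset.prod_insert ha, ← mprod, ih,
      show (X a : MvPolynomial ℕ k) = monomial (Finsupp.single a 1) 1 from rfl, monomial_mul,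
      one_mul]
    congr 1
    rw [vind, vind, Finset.sum_insert ha]

lemma mprod_mem_pathCoverIdeal {n : ℕ} {S : Finset ℕ} (hcov : Cov n S) :
    (mprod S : MvPolynomial ℕ k) ∈ pathCoverIdeal k n := by
  rw [pathCoverIdeal]
  refine Submodule.mem_iInf _ |>.2 fun e => Submodule.mem_iInf _ |>.2 fun he => ?_
  rw [Finset.mem_Icc] at he
  have he2 : e + 1 ≤ n := by omega
  rcases hcov e he.1 he2 with ht | ht
  · have : (mprod S : MvPolynomial ℕ k) = (∏ t ∈ S.erase e, X t) * X e := by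
      rw [mprod, Finset.prod_erase_mul _ _ ht]
    rw [this]
    exact Ideal.mul_mem_left _ _ (Ideal.subset_span (by simp))
  · have : (mprod S : MvPolynomial ℕ k) = (∏ t ∈ S.erase (e+1), X t) * X (e+1) := by
      rw [mprod, Finset.prod_erase_mul _ _ ht]
    rw [this]
    exact Ideal.mul_mem_left _ _ (Ideal.subset_span (by simp))

lemma mem_of_X_dvd_mprod {z : ℕ} {S : Finset ℕ}
    (h : (X z : MvPolynomial ℕ k) ∣ mprod S) : z ∈ S := by
  by_contra hzS
  obtain ⟨c, hc⟩ := h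
  have := congrArg (eval (fun t => if t = z then (0:k) else 1)) hc
  rw [mprod] at this
  rw [map_prod, eval_mul, eval_X, if_pos rfl, zero_mul] at this
  have h1 : (∏ t ∈ S, eval (fun t => if t = z then (0:k) else 1) (X t)) = 1 := by
    apply Finset.prod_eq_one
    intro t ht
    rw [eval_X, if_neg (by rintro rfl; exact hzS ht)]
  rw [h1] at this
  exact one_ne_zero this

lemma rootedList_eq : ∀ n, rootedList k n = (covList n).map (fun S => mprod S) := by
  intro n
  induction n using Nat.strong_induction_on with
  | _ n ih =>
    match n with
    | 0 => simp [rootedList, covList, mprod]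
    | 1 => simp [rootedList, covList, mprod]
    | 2 => simp [rootedList, covList, mprod]
    | 3 =>
      simp only [rootedList, covList, List.map_cons, List.map_nil, List.cons.injEq, and_true]
      constructor
      · rw [mprod, Finset.prod_singleton]
      · rw [mprod, show ({1,3} : Finset ℕ) = insert 1 {3} from rfl,
          Finset.prod_insert (by decide), Finset.prod_singleton]
    | (n + 4) =>
      rw [rootedList, covList, ih (n+2) (by omega), ih (n+1) (by omega), List.map_append,
        List.map_map, List.map_map, List.map_map, List.map_map]
      congr 1
      · apply List.map_congr_left
        intro S hS
        have hIcc := covList_subset_Icc _ _ hS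
        have hn3 : (n+3) ∉ S := fun hc => by have := hIcc hc; simp only [Finset.mem_Icc] at this; omega
        simp only [Function.comp_apply]
        rw [mprod, mprod, Finset.prod_insert hn3]
      · apply List.map_congr_left
        intro S hS
        have hIcc := covList_subset_Icc _ _ hS
        have hn2 : (n+2) ∉ S := fun hc => by have := hIcc hc; simp only [Finset.mem_Icc] at this; omega
        have hn4 : (n+4) ∉ insert (n+2) S := by
          intro hc
          rcases Finset.mem_insert.1 hc with hc | hc
          · omega
          · have := hIcc hc; simp only [Finset.mem_Icc] at this; omega
        simp only [Function.comp_apply]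
        rw [mprod, mprod, Finset.prod_insert hn4, Finset.prod_insert hn2, mul_assoc]

end

end PathAux

open PathAux

/-- Let `n ≥ 2` and `R(P_n) = u_0, …, u_{k-1}` (0-indexed).  Let
`0 < i < j < k` and suppose some variable `x_z` of the colon ideal
`(u_0, …, u_{i-1}) : (u_i)` divides `u_j`.  Then either `u_i u_j` is not a minimal
generator of `J(P_n)^2`, or the expression `u_i u_j` is not the maximal 2-fold
expression. -/
theorem nonminimal_or_nonmaximal_pair (k : Type*) [Field k]
    (n : ℕ) (hn : 2 ≤ n) (i j : ℕ)
    (hi : 0 < i) (hij : i < j) (hj : j < (rootedList k n).length)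
    (z : ℕ)
    (hz : (X z : MvPolynomial ℕ k) ∈ Submodule.colon
      (Ideal.span {x | x ∈ (rootedList k n).take i})
      (Ideal.span {(rootedList k n).getD i 1}))
    (hdvd : (X z : MvPolynomial ℕ k) ∣ (rootedList k n).getD j 1) :
    (rootedList k n).getD i 1 * (rootedList k n).getD j 1 ∉
        minGens ((pathCoverIdeal k n) ^ 2) ∨
      ¬ IsMaxExpr (rootedList k n) 2 (fun t => if t = i ∨ t = j then 1 else 0)
        ((rootedList k n).getD i 1 * (rootedList k n).getD j 1) := by
  classical
  set cl := covList n with hcl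
  have hre : rootedList k n = cl.map (fun S => mprod S) := rootedList_eq n
  have hlen : (rootedList k n).length = cl.length := by rw [hre]; simp
  have hjl : j < cl.length := by rwa [hlen] at hj
  have hil : i < cl.length := by omega
  have hget : ∀ t (ht : t < cl.length), (rootedList k n).getD t 1 = mprod cl[t] := by
    intro t ht
    rw [hre, List.getD_eq_getElem _ _ (by simpa using ht), List.getElem_map]
  set SI := cl[i] with hSIdef
  set SJ := cl[j] with hSJdef
  have hgetI : (rootedList k n).getD i 1 = mprod SI := hget i hil
  have hgetJ : (rootedList k n).getD j 1 = mprod SJ := hget j hjl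
  have hzSJ : z ∈ SJ := mem_of_X_dvd_mprod (by rwa [hgetJ] at hdvd)
  -- colon hypothesis gives a divisor among the prefix
  have hmul : (X z : MvPolynomial ℕ k) * mprod SI ∈
      Ideal.span {x | x ∈ (rootedList k n).take i} := by
    have := Submodule.mem_colon.1 hz (mprod SI)
      (by rw [← hgetI]; exact Ideal.subset_span rfl)
    simpa using this
  have hsetEq : {x | x ∈ (rootedList k n).take i} =
      (fun s => (monomial s 1 : MvPolynomial ℕ k)) '' (vind '' {S | S ∈ cl.take i}) := by
    ext x
    simp only [hre, ← List.map_take, List.mem_map, Set.mem_setOf_eq, Set.mem_image]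
    constructor
    · rintro ⟨S, hS, rfl⟩
      exact ⟨vind S, ⟨S, hS, rfl⟩, (mprod_eq S).symm⟩
    · rintro ⟨s, ⟨S, hS, rfl⟩, rfl⟩
      exact ⟨S, hS, mprod_eq S⟩
  rw [hsetEq] at hmul
  have hXz : (X z : MvPolynomial ℕ k) * mprod SI =
      monomial (Finsupp.single z 1 + vind SI) 1 := by
    rw [mprod_eq, show (X z : MvPolynomial ℕ k) = monomial (Finsupp.single z 1) 1 from rfl,
      monomial_mul, one_mul]
  rw [hXz] at hmul
  obtain ⟨s, hsmem, hsle⟩ := (mem_ideal_span_monomial_image).1 hmul _ (by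
    rw [support_monomial, if_neg one_ne_zero]
    exact Finset.mem_singleton_self _)
  obtain ⟨SL, hSLtake, rfl⟩ := hsmem
  have hSLcl : SL ∈ cl := (List.take_sublist i cl).subset hSLtake
  have hSLsub : ∀ x ∈ SL, x ≠ z → x ∈ SI := by
    intro x hx hxz
    have h1 := Finsupp.le_def.1 hsle x
    rw [vind_apply, Finsupp.add_apply, Finsupp.single_apply, vind_apply,
      if_pos hx, if_neg (fun h => hxz h.symm)] at h1
    by_contra hxi
    rw [if_neg hxi] at h1
    omega
  have hbvLT : bv SL < bv SI := by
    have hpair : (cl.take i ++ cl.drop i).Pairwise (fun S T => bv S < bv T) := by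
      rw [List.take_append_drop]
      exact covList_sorted n
    have hp2 := (List.pairwise_append.1 hpair).2.2
    apply hp2 SL hSLtake
    rw [List.mem_iff_getElem]
    refine ⟨0, by simp; omega, by simp [hSIdef]⟩
  have hIccI : SI ⊆ Finset.Icc 1 n := covList_subset_Icc n _ (List.getElem_mem _)
  have hIcov : Cov n SI := covList_cov n _ (List.getElem_mem _)
  have hJcov : Cov n SJ := covList_cov n _ (List.getElem_mem _)
  obtain ⟨A, hAcov, hAIJ, hBcov, hAbv⟩ :
      ∃ A : Finset ℕ, Cov n A ∧ (∀ x ∈ A, x ∈ SI ∨ x ∈ SJ) ∧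
        Cov n ((SI ∩ SJ) ∪ ((SI ∪ SJ) \ A)) ∧ bv A < bv SI := by
    by_cases hcase : z ∈ SL ∧ z ∉ SI
    · exact key_main n z SL SI SJ (covList_subset_Icc n _ hSLcl) hIccI
        (covList_cov n _ hSLcl) hIcov hJcov (covList_needAll n _ hSLcl)
        hSLsub hcase.1 hcase.2 hzSJ hbvLT
    · have hsub : ∀ x ∈ SL, x ∈ SI := by
        intro x hx
        by_cases hxz : x = z
        · subst hxz
          by_contra hxi
          exact hcase ⟨hx, hxi⟩
        · exact hSLsub x hx hxz
      refine ⟨SL, covList_cov n _ hSLcl, fun x hx => Or.inl (hsub x hx), ?_, hbvLT⟩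
      intro e he1 he2
      rcases hJcov e he1 he2 with ht | ht
      · left
        by_cases htI : e ∈ SI
        · exact Finset.mem_union.2 (Or.inl (Finset.mem_inter.2 ⟨htI, ht⟩))
        · refine Finset.mem_union.2 (Or.inr (Finset.mem_sdiff.2
            ⟨Finset.mem_union.2 (Or.inr ht), fun hc => htI (hsub _ hc)⟩))
      · right
        by_cases htI : e + 1 ∈ SI
        · exact Finset.mem_union.2 (Or.inl (Finset.mem_inter.2 ⟨htI, ht⟩))
        · refine Finset.mem_union.2 (Or.inr (Finset.mem_sdiff.2
            ⟨Finset.mem_union.2 (Or.inr ht), fun hc => htI (hsub _ hc)⟩))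
  obtain ⟨SP, hSPcl, hSPA⟩ := covList_complete n A hAcov
  obtain ⟨SQ, hSQcl, hSQB⟩ := covList_complete n _ hBcov
  obtain ⟨p, hpl, hSPeq⟩ := List.mem_iff_getElem.1 hSPcl
  obtain ⟨q, hql, hSQeq⟩ := List.mem_iff_getElem.1 hSQcl
  have hbvSP : bv SP ≤ bv A := bv_mono hSPA
  have hpi : p < i := by
    by_contra hc
    push_neg at hc
    rcases eq_or_lt_of_le hc with heq | hlt
    · subst heq
      have hSIeq : bv SI = bv SP := congrArg bv hSPeq
      omega
    · have hpair := List.pairwise_iff_getElem.1 (covList_sorted n) i p (by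
        rw [← hcl]; exact hil) hpl hlt
      rw [hSPeq] at hpair
      have hSIeq : bv SI = bv ((covList n)[i]'(by rw [← hcl]; exact hil)) := rfl
      omega
  -- exponent vector comparison
  have hWM : vind SP + vind SQ ≤ vind SI + vind SJ := by
    rw [Finsupp.le_def]
    intro x
    have eW : (vind SP + vind SQ) x = (if x ∈ SP then 1 else 0) + (if x ∈ SQ then 1 else 0) := by
      simp [Finsupp.add_apply, vind_apply]
    have eM : (vind SI + vind SJ) x = (if x ∈ SI then 1 else 0) + (if x ∈ SJ then 1 else 0) := by
      simp [Finsupp.add_apply, vind_apply]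
    rw [eW, eM]
    by_cases hxP : x ∈ SP <;> by_cases hxQ : x ∈ SQ
    · have hxA := hSPA hxP
      have hxB := hSQB hxQ
      have hxIJ : x ∈ SI ∧ x ∈ SJ := by
        rcases Finset.mem_union.1 hxB with h | h
        · exact Finset.mem_inter.1 h
        · exact absurd hxA (Finset.mem_sdiff.1 h).2
      simp [hxP, hxQ, hxIJ.1, hxIJ.2]
    · rcases hAIJ x (hSPA hxP) with h | h <;> simp [hxP, hxQ, h]
    · have hxB := hSQB hxQ
      have : x ∈ SI ∨ x ∈ SJ := by
        rcases Finset.mem_union.1 hxB with h | h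
        · exact Or.inl (Finset.mem_inter.1 h).1
        · exact Finset.mem_union.1 (Finset.mem_sdiff.1 h).1
      rcases this with h | h <;> simp [hxP, hxQ, h]
    · simp [hxP, hxQ]
  have hprodIJ : (rootedList k n).getD i 1 * (rootedList k n).getD j 1 =
      monomial (vind SI + vind SJ) 1 := by
    rw [hgetI, hgetJ, mprod_eq, mprod_eq, monomial_mul, one_mul]
  have hprodPQ : (mprod SP : MvPolynomial ℕ k) * mprod SQ =
      monomial (vind SP + vind SQ) 1 := by
    rw [mprod_eq, mprod_eq, monomial_mul, one_mul]
  by_cases hWMeq : vind SP + vind SQ = vind SI + vind SJ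
  · -- second alternative : not the maximal expression
    right
    rintro ⟨-, hmax⟩
    set b : ℕ → ℕ := fun t => (if t = p then 1 else 0) + (if t = q then 1 else 0) with hb
    have hplen : p < (rootedList k n).length := by omega
    have hqlen : q < (rootedList k n).length := by rw [hlen]; exact hql
    have hexpr : IsExprOn (rootedList k n) 2 b
        ((rootedList k n).getD i 1 * (rootedList k n).getD j 1) := by
      refine ⟨?_, ?_, ?_⟩
      · intro t ht
        have htp : t ≠ p := by omega
        have htq : t ≠ q := by omega
        simp [hb, htp, htq]
      · simp only [hb]
        rw [Finset.sum_add_distrib,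
          Finset.sum_ite_eq' (Finset.range _) p (fun _ => 1),
          Finset.sum_ite_eq' (Finset.range _) q (fun _ => 1),
          if_pos (Finset.mem_range.2 hplen), if_pos (Finset.mem_range.2 hqlen)]
      · have hsplit : ∀ t ∈ Finset.range (rootedList k n).length,
            ((rootedList k n).getD t 1) ^ (b t) =
              ((rootedList k n).getD t 1) ^ (if t = p then 1 else 0) *
              ((rootedList k n).getD t 1) ^ (if t = q then 1 else 0) := by
          intro t _
          rw [hb, pow_add]
        rw [Finset.prod_congr rfl hsplit, Finset.prod_mul_distrib]
        have hP : (∏ t ∈ Finset.range (rootedList k n).length,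
            ((rootedList k n).getD t 1) ^ (if t = p then 1 else 0)) = mprod SP := by
          simp only [pow_ite, pow_one, pow_zero]
          rw [Finset.prod_ite_eq' (Finset.range _) p (fun t => (rootedList k n).getD t 1),
            if_pos (Finset.mem_range.2 hplen), hget p (by omega), hSPeq]
        have hQ : (∏ t ∈ Finset.range (rootedList k n).length,
            ((rootedList k n).getD t 1) ^ (if t = q then 1 else 0)) = mprod SQ := by
          simp only [pow_ite, pow_one, pow_zero]
          rw [Finset.prod_ite_eq' (Finset.range _) q (fun t => (rootedList k n).getD t 1),
            if_pos (Finset.mem_range.2 hqlen), hget q hql, hSQeq]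
        rw [hP, hQ, hprodPQ, hWMeq, hprodIJ]
    have hbne : b ≠ (fun t => if t = i ∨ t = j then 1 else 0) := by
      intro hc
      have hcp := congrFun hc p
      have hpi' : ¬(p = i ∨ p = j) := by rintro (rfl | rfl) <;> omega
      simp [hb, hpi'] at hcp
    obtain ⟨t, hpre, hlt⟩ := hmax b hexpr hbne
    by_cases hti : t = i ∨ t = j
    · have hppre := hpre p (by rcases hti with rfl | rfl <;> omega)
      have hpi' : ¬(p = i ∨ p = j) := by rintro (rfl | rfl) <;> omega
      simp [hb, hpi'] at hppre
      split_ifs at hppre <;> omega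
    · simp [hti] at hlt
  · -- first alternative : not a minimal generator
    left
    rintro ⟨-, -, hminimal⟩
    have hPQmem : (mprod SP : MvPolynomial ℕ k) * mprod SQ ∈ (pathCoverIdeal k n) ^ 2 := by
      rw [pow_two]
      exact Ideal.mul_mem_mul
        (mprod_mem_pathCoverIdeal (covList_cov n _ hSPcl))
        (mprod_mem_pathCoverIdeal (covList_cov n _ hSQcl))
    have hdvd2 : (mprod SP : MvPolynomial ℕ k) * mprod SQ ∣
        (rootedList k n).getD i 1 * (rootedList k n).getD j 1 := by
      rw [hprodIJ, hprodPQ]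
      exact ⟨monomial ((vind SI + vind SJ) - (vind SP + vind SQ)) 1,
        by rw [monomial_mul, one_mul, add_tsub_cancel_of_le hWM]⟩
    have heq := hminimal _ ⟨vind SP + vind SQ, hprodPQ⟩ hPQmem hdvd2
    rw [hprodPQ, hprodIJ] at heq
    exact hWMeq (monomial_left_injective one_ne_zero heq)
end

section
/- Let G be a finite simple chordal graph with a rooted list R(G) = u_1,…,u_q. Then (1) {u_1,…,u_q} equals the minimal monomial generating set G(J(G)) of the cover ideal J(G), and (2) J(G) has linear quotients with respect to the order u_1,…,u_q, i.e., for every i = 2,…,q the colon ideal (u_1,…,u_{i−1}) : (u_i) is generated by a subset of the variables. -/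
open MvPolynomial

/-- A finite simple graph on a finite set of vertices drawn from `ℕ`
(vertices are identified with the variables `x_i` of the polynomial ring). -/
structure FinGraph where
  verts : Finset ℕ
  adj : ℕ → ℕ → Bool
  symm : ∀ a b, adj a b = adj b a
  loopless : ∀ a, adj a a = false
  mem_of_adj : ∀ a b, adj a b = true → a ∈ verts ∧ b ∈ verts

/-- The (open) neighbourhood `N(v)` of a vertex. -/
def FinGraph.nbr (G : FinGraph) (v : ℕ) : Finset ℕ :=
  G.verts.filter fun w => G.adj v w

/-- The graph `G \ A` obtained by deleting a set `A` of vertices. -/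
def FinGraph.del (G : FinGraph) (A : Finset ℕ) : FinGraph where
  verts := G.verts \ A
  adj a b := G.adj a b && !(decide (a ∈ A) || decide (b ∈ A))
  symm a b := by (try simp only []); rw [G.symm a b, Bool.or_comm]
  loopless a := by simp [G.loopless a]
  mem_of_adj a b h := by
    simp only [Bool.and_eq_true, Bool.not_eq_true', Bool.or_eq_false_iff,
      decide_eq_false_iff_not] at h
    exact ⟨Finset.mem_sdiff.2 ⟨(G.mem_of_adj a b h.1).1, h.2.1⟩,
      Finset.mem_sdiff.2 ⟨(G.mem_of_adj a b h.1).2, h.2.2⟩⟩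

/-- A graph is chordal if it has no induced cycle of length greater than `3`. -/
def FinGraph.Chordal (G : FinGraph) : Prop :=
  ¬ ∃ (m : ℕ) (f : ℕ → ℕ), 4 ≤ m ∧
    (∀ i j, i < m → j < m → f i = f j → i = j) ∧
    (∀ i, i < m → G.adj (f i) (f ((i + 1) % m)) = true) ∧
    (∀ i j, i < m → j < m → G.adj (f i) (f j) = true →
      j = (i + 1) % m ∨ i = (j + 1) % m)

/-- A simplicial vertex: its neighbourhood induces a complete graph. -/
def FinGraph.Simplicial (G : FinGraph) (v : ℕ) : Prop :=
  v ∈ G.verts ∧ ∀ a ∈ G.nbr v, ∀ b ∈ G.nbr v, a ≠ b → G.adj a b = true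

/-- The cover ideal `J(G)` of a graph, i.e. the intersection of the ideals
`(x_a, x_b)` over all edges `{x_a, x_b}` of `G`. -/
noncomputable def coverIdeal (k : Type*) [Field k] (G : FinGraph) : Ideal (MvPolynomial ℕ k) :=
  ⨅ (a : ℕ) (b : ℕ) (_ : G.adj a b = true), Ideal.span {(X a : MvPolynomial ℕ k), X b}

/-- `IsRootedList k G L`: `L` is a rooted list of the (chordal) graph `G`.  If `G` has
no edges then `L = [1]`; otherwise, for some simplicial vertex `v` whose closed
neighbourhood `N[v]` is enumerated as `l = v, x_2, …, x_m`, `L` is the concatenation of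
the lists `R(G \ N[x_i]) · N(x_i)` for `x_i` running along `l`. -/
inductive IsRootedList (k : Type*) [Field k] : FinGraph → List (MvPolynomial ℕ k) → Prop
  | edgeless (G : FinGraph) (h : ∀ a b, G.adj a b = false) :
      IsRootedList k G [1]
  | step (G : FinGraph) (v : ℕ)
      (hsimp : G.Simplicial v) (hedge : ∃ w, G.adj v w = true)
      (l : List ℕ) (hnd : l.Nodup) (hhd : l.head? = some v)
      (hset : l.toFinset = insert v (G.nbr v))
      (Ls : List (List (MvPolynomial ℕ k))) (hlen : Ls.length = l.length)
      (hrec : ∀ i, i < l.length →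
        IsRootedList k (G.del (insert (l.getD i 0) (G.nbr (l.getD i 0)))) (Ls.getD i []))
      : IsRootedList k G
          ((List.range l.length).flatMap fun i =>
            (Ls.getD i []).map fun u => (∏ j ∈ G.nbr (l.getD i 0), X j) * u)

/-!
Identify a squarefree monomial with its support, so that `G(J(G))` is the set of minimal vertex
covers. If `v` is simplicial, a minimal cover `C` misses some `w ∈ N[v]`; then `N(w) ⊆ C` and
`C \ N[w]` is a minimal cover of `G \ N[w]`, while conversely `N(w) ∪ D` is a minimal cover of
`G` for every minimal cover `D` of `G \ N[w]`. By induction, the terms of a rooted list are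
exactly the minimal covers.

For linear quotients, if `C = N(x_i) ∪ D` and `B` comes from an earlier block `j < i`, then
`x_i ∈ N(x_j) ⊆ B` because `N[v]` is a clique, `x_i ∉ C`, and the block of `v` contains a cover
`N(v) ∪ E ⊆ C ∪ {x_i}`; inside one block the property comes from the rooted list of `G \ N[x_i]`.
This exchange property makes each colon ideal `(u_1, …, u_{i-1}) : u_i` the ideal generated by
the variables `x` with `u_j ∣ x u_i` for some `j < i`.
-/

open Finset

namespace FinGraph

def IsVertexCover (G : FinGraph) (C : Finset ℕ) : Prop :=
  ∀ a b, G.adj a b = true → a ∈ C ∨ b ∈ C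

variable {G : FinGraph} {v w : ℕ} {A C D : Finset ℕ}

lemma mem_nbr : w ∈ G.nbr v ↔ G.adj v w = true := by
  simpa [nbr] using fun h => (G.mem_of_adj v w h).2

lemma notMem_nbr_self (v : ℕ) : v ∉ G.nbr v := by
  simp [mem_nbr, G.loopless]

lemma del_adj {a b : ℕ} : (G.del A).adj a b = true ↔ G.adj a b = true ∧ a ∉ A ∧ b ∉ A := by
  simp [del]

lemma Simplicial.adj (hs : G.Simplicial v) {a b : ℕ} (ha : a ∈ insert v (G.nbr v))
    (hb : b ∈ insert v (G.nbr v)) (hab : a ≠ b) : G.adj a b = true := by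
  rcases mem_insert.1 ha with rfl | ha <;> rcases mem_insert.1 hb with rfl | hb
  · exact absurd rfl hab
  · exact mem_nbr.1 hb
  · rw [G.symm]; exact mem_nbr.1 ha
  · exact hs.2 a ha b hb hab

lemma IsVertexCover.sdiff (hC : G.IsVertexCover C) (A : Finset ℕ) :
    (G.del A).IsVertexCover (C \ A) := by
  intro a b hab
  obtain ⟨hab, ha, hb⟩ := del_adj.1 hab
  exact (hC a b hab).imp (fun h => mem_sdiff.2 ⟨h, ha⟩) (fun h => mem_sdiff.2 ⟨h, hb⟩)

lemma IsVertexCover.nbr_subset (hC : G.IsVertexCover C) (hw : w ∉ C) : G.nbr w ⊆ C :=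
  fun u hu => (hC w u (mem_nbr.1 hu)).resolve_left hw

lemma IsVertexCover.nbr_union (hD : (G.del (insert w (G.nbr w))).IsVertexCover D) :
    G.IsVertexCover (G.nbr w ∪ D) := by
  intro a b hab
  by_cases ha : a ∈ G.nbr w
  · exact Or.inl (mem_union_left _ ha)
  by_cases hb : b ∈ G.nbr w
  · exact Or.inr (mem_union_left _ hb)
  have haw : a ≠ w := by rintro rfl; exact hb (mem_nbr.2 hab)
  have hbw : b ≠ w := by rintro rfl; exact ha (mem_nbr.2 (G.symm a b ▸ hab))
  exact (hD a b (del_adj.2 ⟨hab, by simp [ha, haw], by simp [hb, hbw]⟩)).imp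
    (mem_union_right _) (mem_union_right _)

lemma IsVertexCover.nbr_union_sdiff (hC : G.IsVertexCover C) (hw : w ∉ C) :
    G.nbr w ∪ (C \ insert w (G.nbr w)) = C := by
  ext x
  by_cases hx : x ∈ G.nbr w
  · simp [hx, hC.nbr_subset hw hx]
  · have : x ∈ C → x ≠ w := by rintro h rfl; exact hw h
    simp only [mem_union, hx, mem_sdiff, mem_insert, false_or, or_false]
    tauto

lemma subset_verts_of_minimal (hC : Minimal G.IsVertexCover C) : C ⊆ G.verts := by
  have hcov : G.IsVertexCover (C ∩ G.verts) := fun a b hab =>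
    (hC.prop a b hab).imp (fun h => mem_inter.2 ⟨h, (G.mem_of_adj a b hab).1⟩)
      (fun h => mem_inter.2 ⟨h, (G.mem_of_adj a b hab).2⟩)
  rw [← hC.eq_of_le hcov inter_subset_left]
  exact inter_subset_right

lemma disjoint_of_minimal_del (hD : Minimal (G.del A).IsVertexCover D) : Disjoint A D :=
  disjoint_sdiff_self_right.mono_right (subset_verts_of_minimal hD)

lemma minimal_nbr_union (hD : Minimal (G.del (insert w (G.nbr w))).IsVertexCover D) :
    Minimal G.IsVertexCover (G.nbr w ∪ D) := by
  have hwD : w ∉ D := disjoint_left.1 (disjoint_of_minimal_del hD) (mem_insert_self w _)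
  refine ⟨hD.prop.nbr_union, fun E hE hEle => ?_⟩
  have hwE : w ∉ E := fun h => (mem_union.1 (hEle h)).elim (notMem_nbr_self w) hwD
  have hED : E \ insert w (G.nbr w) = D :=
    hD.eq_of_le (hE.sdiff _) fun x hx => by
      obtain ⟨hxE, hx⟩ := mem_sdiff.1 hx
      exact (mem_union.1 (hEle hxE)).resolve_left fun h => hx (mem_insert_of_mem h)
  rw [← hED]
  exact union_subset (hE.nbr_subset hwE) sdiff_subset

lemma minimal_sdiff_closedNbr (hC : Minimal G.IsVertexCover C) (hw : w ∉ C) :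
    Minimal (G.del (insert w (G.nbr w))).IsVertexCover (C \ insert w (G.nbr w)) := by
  refine ⟨hC.prop.sdiff _, fun D hD hDle => ?_⟩
  have hDC : G.nbr w ∪ D = C := hC.eq_of_le hD.nbr_union
    (union_subset (hC.prop.nbr_subset hw) (hDle.trans sdiff_subset))
  intro x hx
  obtain ⟨hxC, hxN⟩ := mem_sdiff.1 hx
  rw [← hDC] at hxC
  exact (mem_union.1 hxC).resolve_left fun h => hxN (mem_insert_of_mem h)

lemma exists_mem_closedNbr_notMem (hC : Minimal G.IsVertexCover C) (v : ℕ) :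
    ∃ w ∈ insert v (G.nbr v), w ∉ C := by
  by_contra! h
  have hcov : G.IsVertexCover (C.erase v) := by
    intro a b hab
    have hba : b ≠ a := fun hb => notMem_nbr_self a (hb ▸ mem_nbr.2 hab)
    rcases eq_or_ne a v with rfl | hav
    · exact Or.inr (mem_erase.2 ⟨hba, h b (mem_insert_of_mem (mem_nbr.2 hab))⟩)
    rcases eq_or_ne b v with rfl | hbv
    · exact Or.inl (mem_erase.2 ⟨hba.symm, h a (mem_insert_of_mem (mem_nbr.2 (G.symm a b ▸ hab)))⟩)
    exact (hC.prop a b hab).imp (fun ha => mem_erase.2 ⟨hav, ha⟩) (fun hb => mem_erase.2 ⟨hbv, hb⟩)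
  have hvC := h v (mem_insert_self v _)
  rw [← hC.eq_of_le hcov (erase_subset v C)] at hvC
  exact notMem_erase v C hvC

lemma Simplicial.exists_minimal_subset (hs : G.Simplicial v) (hw : w ∈ insert v (G.nbr v))
    (hD : Minimal (G.del (insert w (G.nbr w))).IsVertexCover D) :
    ∃ E, Minimal (G.del (insert v (G.nbr v))).IsVertexCover E ∧
      G.nbr v ∪ E ⊆ insert w (G.nbr w ∪ D) := by
  obtain ⟨E, hE, hEmin⟩ := exists_minimal_le_of_wellFoundedLT _ _
    (hD.prop.nbr_union.sdiff (insert v (G.nbr v)))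
  refine ⟨E, hEmin, union_subset (fun y hy => ?_) fun y hy =>
    mem_insert_of_mem (mem_sdiff.1 (hE hy)).1⟩
  rcases eq_or_ne y w with rfl | hyw
  · exact mem_insert_self _ _
  · exact mem_insert_of_mem (mem_union_left _
      (mem_nbr.2 (hs.adj hw (mem_insert_of_mem hy) hyw.symm)))

end FinGraph

section Monomials

variable {R : Type*} [CommSemiring R] {B C : Finset ℕ}

noncomputable def ones (C : Finset ℕ) : ℕ →₀ ℕ := Finsupp.indicator C fun _ _ => 1

lemma ones_apply (C : Finset ℕ) (y : ℕ) : ones C y = if y ∈ C then 1 else 0 := by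
  classical
  simp [ones, Finsupp.indicator_apply]

lemma support_ones (C : Finset ℕ) : (ones C).support = C := by
  ext y
  simp [ones_apply]

lemma ones_le_iff {e : ℕ →₀ ℕ} : ones C ≤ e ↔ C ⊆ e.support := by
  refine ⟨fun h y hy => ?_, fun h y => ?_⟩
  · have := h y
    rw [ones_apply, if_pos hy] at this
    exact Finsupp.mem_support_iff.2 (by omega)
  · rw [ones_apply]
    split_ifs with hy
    · exact Nat.one_le_iff_ne_zero.2 (Finsupp.mem_support_iff.1 (h hy))
    · exact Nat.zero_le _

lemma support_subset_of_le_ones {e : ℕ →₀ ℕ} (h : e ≤ ones C) : e.support ⊆ C := by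
  intro y hy
  have := h y
  rw [ones_apply] at this
  split_ifs at this with hyC
  · exact hyC
  · exact absurd (Nat.le_zero.1 this) (Finsupp.mem_support_iff.1 hy)

variable (R) in
noncomputable def sqfreeMonomial (C : Finset ℕ) : MvPolynomial ℕ R := ∏ x ∈ C, X x

lemma sqfreeMonomial_eq (C : Finset ℕ) : sqfreeMonomial R C = monomial (ones C) 1 := by
  simpa [sqfreeMonomial, ones] using prod_X_pow (R := R) (fun _ => 1) C

lemma sqfreeMonomial_union (h : Disjoint B C) :
    sqfreeMonomial R (B ∪ C) = sqfreeMonomial R B * sqfreeMonomial R C :=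
  prod_union h

lemma sqfreeMonomial_dvd_X_mul {y : ℕ} (h : B ⊆ insert y C) :
    sqfreeMonomial R B ∣ X y * sqfreeMonomial R C := by
  refine (prod_dvd_prod_of_subset _ _ _ h).trans ?_
  by_cases hy : y ∈ C
  · rw [insert_eq_of_mem hy]
    exact dvd_mul_left _ _
  · rw [prod_insert hy]
    rfl

lemma image_sqfreeMonomial (S : Set (Finset ℕ)) :
    sqfreeMonomial R '' S = (fun e => monomial e (1 : R)) '' (ones '' S) := by
  rw [Set.image_image]
  exact Set.image_congr fun C _ => sqfreeMonomial_eq C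

theorem colon_span_sqfreeMonomial {S : Set (Finset ℕ)}
    (h : ∀ B ∈ S, ∃ x ∈ B, x ∉ C ∧ ∃ B' ∈ S, B' ⊆ insert x C) :
    (Ideal.span (sqfreeMonomial R '' S)).colon (Ideal.span {sqfreeMonomial R C}) =
      Ideal.span (X '' {y | ∃ B ∈ S, B ⊆ insert y C}) := by
  apply le_antisymm
  · intro p hp
    rw [Ideal.mem_colon_span_singleton, image_sqfreeMonomial, sqfreeMonomial_eq,
      mem_ideal_span_monomial_image] at hp
    rw [mem_ideal_span_X_image]
    intro m hm
    have hmC : m + ones C ∈ (p * monomial (ones C) 1).support := by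
      rwa [mem_support_iff, coeff_mul_monomial, mul_one, ← mem_support_iff]
    obtain ⟨_, ⟨B, hB, rfl⟩, hle⟩ := hp _ hmC
    obtain ⟨x, hxB, hxC, B', hB', hsub⟩ := h B hB
    refine ⟨x, ⟨B', hB', hsub⟩, ?_⟩
    have := hle x
    rw [Finsupp.add_apply, ones_apply, ones_apply, if_pos hxB, if_neg hxC] at this
    omega
  · rw [Ideal.span_le]
    rintro _ ⟨y, ⟨B, hB, hsub⟩, rfl⟩
    exact Ideal.mem_colon_span_singleton.2 <|
      Ideal.mem_of_dvd _ (sqfreeMonomial_dvd_X_mul hsub) (Ideal.subset_span ⟨B, hB, rfl⟩)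

end Monomials

section CoverIdeal

variable {k : Type*} [Field k] {G : FinGraph}

lemma monomial_mem_coverIdeal {e : ℕ →₀ ℕ} :
    monomial e (1 : k) ∈ coverIdeal k G ↔ G.IsVertexCover e.support := by
  simp [coverIdeal, ← Set.image_pair, mem_ideal_span_X_image,
    FinGraph.IsVertexCover]

lemma minGens_coverIdeal :
    minGens (coverIdeal k G) = sqfreeMonomial k '' {C | Minimal G.IsVertexCover C} := by
  have hmem {C : Finset ℕ} (hC : G.IsVertexCover C) : sqfreeMonomial k C ∈ coverIdeal k G := by
    rwa [sqfreeMonomial_eq, monomial_mem_coverIdeal, support_ones]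
  ext m
  constructor
  · rintro ⟨⟨e, rfl⟩, he, hmin⟩
    obtain ⟨C, hCe, hC⟩ := exists_minimal_le_of_wellFoundedLT _ _ (monomial_mem_coverIdeal.1 he)
    refine ⟨C, hC, hmin _ ⟨ones C, sqfreeMonomial_eq C⟩ (hmem hC.prop) ?_⟩
    rw [sqfreeMonomial_eq, monomial_dvd_monomial]
    exact ⟨Or.inr (ones_le_iff.2 hCe), dvd_rfl⟩
  · rintro ⟨C, hC, rfl⟩
    refine ⟨⟨ones C, sqfreeMonomial_eq C⟩, hmem hC.prop, ?_⟩
    rintro _ ⟨e, rfl⟩ he hdvd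
    rw [sqfreeMonomial_eq, monomial_dvd_monomial] at hdvd
    rw [sqfreeMonomial_eq]
    have hle : e ≤ ones C := hdvd.1.resolve_left one_ne_zero
    have hsupp : e.support = C :=
      hC.eq_of_le (monomial_mem_coverIdeal.1 he) (support_subset_of_le_ones hle)
    rw [le_antisymm hle (ones_le_iff.2 hsupp.ge)]

end CoverIdeal

section LinearQuotients

/-- For squarefree monomials `u_B` this is what makes each colon ideal
`(u_B : B ∈ pre) : u_C` generated by variables, see `colon_span_sqfreeMonomial`. -/
def HasLinearQuotients (Cs : List (Finset ℕ)) : Prop :=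
  ∀ (pre : List (Finset ℕ)) (C : Finset ℕ) suf, Cs = pre ++ C :: suf →
    ∀ B ∈ pre, ∃ x ∈ B, x ∉ C ∧ ∃ B' ∈ pre, B' ⊆ insert x C

lemma hasLinearQuotients_singleton (C : Finset ℕ) : HasLinearQuotients [C] := by
  intro pre C' suf h B hB
  rcases List.append_eq_singleton_iff.1 h.symm with ⟨rfl, -⟩ | ⟨-, h⟩
  · simp at hB
  · simp at h

lemma HasLinearQuotients.append {pre post : List (Finset ℕ)} (hpre : HasLinearQuotients pre)
    (hpost : HasLinearQuotients post)
    (hcross : ∀ C ∈ post, ∀ B ∈ pre, ∃ x ∈ B, x ∉ C ∧ ∃ B' ∈ pre, B' ⊆ insert x C) :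
    HasLinearQuotients (pre ++ post) := by
  intro P C S h B hB
  rcases List.append_eq_append_iff.1 h with ⟨a, rfl, hpost'⟩ | ⟨c, rfl, hc⟩
  · rcases List.mem_append.1 hB with hB | hB
    · obtain ⟨x, hxB, hxC, B', hB', hsub⟩ := hcross C (by simp [hpost']) B hB
      exact ⟨x, hxB, hxC, B', List.mem_append_left _ hB', hsub⟩
    · obtain ⟨x, hxB, hxC, B', hB', hsub⟩ := hpost a C S hpost' B hB
      exact ⟨x, hxB, hxC, B', List.mem_append_right _ hB', hsub⟩
  · rcases List.append_eq_cons_iff.1 hc.symm with ⟨rfl, rfl⟩ | ⟨c', rfl, -⟩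
    · simpa using hcross C (by simp) B (by simpa using hB)
    · exact hpre P C c' rfl B hB

lemma hasLinearQuotients_flatMap_range (f : ℕ → List (Finset ℕ)) (n : ℕ)
    (hf : ∀ i < n, HasLinearQuotients (f i))
    (hcross : ∀ i < n, ∀ j < i, ∀ B ∈ f j, ∀ C ∈ f i,
      ∃ x ∈ B, x ∉ C ∧ ∃ k < i, ∃ B' ∈ f k, B' ⊆ insert x C) :
    HasLinearQuotients ((List.range n).flatMap f) := by
  induction n with
  | zero => intro pre C suf h; simp at h
  | succ n ih =>
    rw [List.range_succ, List.flatMap_append, List.flatMap_singleton]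
    refine (ih (fun i hi => hf i (by omega)) fun i hi => hcross i (by omega)).append
      (hf n n.lt_succ_self) fun C hC B hB => ?_
    obtain ⟨j, hj, hBj⟩ := List.mem_flatMap.1 hB
    obtain ⟨x, hxB, hxC, k, hk, B', hB', hsub⟩ :=
      hcross n n.lt_succ_self j (List.mem_range.1 hj) B hBj C hC
    exact ⟨x, hxB, hxC, B', List.mem_flatMap.2 ⟨k, List.mem_range.2 hk, hB'⟩, hsub⟩

lemma HasLinearQuotients.map_union {Ds : List (Finset ℕ)} (h : HasLinearQuotients Ds)
    {N : Finset ℕ} (hN : ∀ D ∈ Ds, Disjoint N D) : HasLinearQuotients (Ds.map (N ∪ ·)) := by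
  intro pre C suf hs B hB
  obtain ⟨l₁, l₂, rfl, rfl, hl₂⟩ := List.map_eq_append_iff.1 hs
  obtain ⟨D, t, rfl, rfl, -⟩ := List.map_eq_cons_iff.1 hl₂
  obtain ⟨DB, hDB, rfl⟩ := List.mem_map.1 hB
  obtain ⟨x, hxB, hxD, DB', hDB', hsub⟩ := h l₁ D t rfl DB hDB
  have hxN : x ∉ N := disjoint_right.1 (hN DB (by simp [hDB])) hxB
  exact ⟨x, mem_union_right _ hxB, by simp [hxN, hxD], N ∪ DB', List.mem_map_of_mem hDB',
    union_insert x N D ▸ union_subset_union_right hsub⟩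

variable {k : Type*} [Field k]

lemma HasLinearQuotients.genByVars_colon {Cs : List (Finset ℕ)} (h : HasLinearQuotients Cs)
    {i : ℕ} (hi : i < Cs.length) :
    genByVars (Submodule.colon (Ideal.span {x | x ∈ (Cs.map (sqfreeMonomial k)).take i})
      (Ideal.span {(Cs.map (sqfreeMonomial k)).getD i 1})) := by
  have hsplit : Cs = Cs.take i ++ Cs[i] :: Cs.drop (i + 1) := by
    rw [← List.drop_eq_getElem_cons hi, List.take_append_drop]
  have htake : {x | x ∈ (Cs.map (sqfreeMonomial k)).take i} =
      sqfreeMonomial k '' {B | B ∈ Cs.take i} := by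
    ext
    simp [← List.map_take]
  have hget : (Cs.map (sqfreeMonomial k)).getD i 1 = sqfreeMonomial k Cs[i] := by
    rw [List.getD_eq_getElem _ _ (by simpa using hi), List.getElem_map]
  rw [htake, hget,
    colon_span_sqfreeMonomial (S := {B | B ∈ Cs.take i}) fun B hB => h _ _ _ hsplit B hB]
  exact ⟨_, rfl⟩

end LinearQuotients

section RootedList

open FinGraph

/-- The covers behind the list built in `IsRootedList.step`, where `F i` holds the covers behind
the rooted list of `G \ N[x_i]`. -/
def rootedConcat (G : FinGraph) (l : List ℕ) (F : ℕ → List (Finset ℕ)) : List (Finset ℕ) :=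
  (List.range l.length).flatMap fun i => (F i).map (G.nbr (l.getD i 0) ∪ ·)

variable {G : FinGraph} {v : ℕ} {l : List ℕ} {F : ℕ → List (Finset ℕ)}
  (hF : ∀ i < l.length, ∀ D, D ∈ F i ↔
    Minimal (G.del (insert (l.getD i 0) (G.nbr (l.getD i 0)))).IsVertexCover D)
include hF

lemma map_sqfreeMonomial_rootedConcat {R : Type*} [CommSemiring R]
    {Ls : List (List (MvPolynomial ℕ R))}
    (hLs : ∀ i < l.length, Ls.getD i [] = (F i).map (sqfreeMonomial R)) :
    (rootedConcat G l F).map (sqfreeMonomial R) = (List.range l.length).flatMap fun i =>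
      (Ls.getD i []).map fun u => (∏ j ∈ G.nbr (l.getD i 0), X j) * u := by
  rw [rootedConcat, List.map_flatMap]
  refine List.flatMap_congr fun i hi => ?_
  have hi := List.mem_range.1 hi
  rw [hLs i hi, List.map_map, List.map_map]
  refine List.map_congr_left fun D hD => sqfreeMonomial_union ?_
  exact (disjoint_of_minimal_del ((hF i hi D).1 hD)).mono_left (subset_insert _ _)

lemma mem_rootedConcat_iff (hset : l.toFinset = insert v (G.nbr v)) {C : Finset ℕ} :
    C ∈ rootedConcat G l F ↔ Minimal G.IsVertexCover C := by
  simp only [rootedConcat, List.mem_flatMap, List.mem_range, List.mem_map]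
  constructor
  · rintro ⟨i, hi, D, hD, rfl⟩
    exact minimal_nbr_union ((hF i hi D).1 hD)
  · intro hC
    obtain ⟨w, hw, hwC⟩ := exists_mem_closedNbr_notMem hC v
    rw [← hset, List.mem_toFinset, List.mem_iff_getElem] at hw
    obtain ⟨i, hi, hiw⟩ := hw
    rw [← hiw, ← List.getD_eq_getElem _ 0 hi] at hwC
    exact ⟨i, hi, _, (hF i hi _).2 (minimal_sdiff_closedNbr hC hwC),
      hC.prop.nbr_union_sdiff hwC⟩

lemma hasLinearQuotients_rootedConcat (hs : G.Simplicial v) (hnd : l.Nodup)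
    (hhd : l.head? = some v) (hset : l.toFinset = insert v (G.nbr v))
    (hlq : ∀ i < l.length, HasLinearQuotients (F i)) :
    HasLinearQuotients (rootedConcat G l F) := by
  have hmem : ∀ i < l.length, l.getD i 0 ∈ insert v (G.nbr v) := fun i hi => by
    rw [← hset, List.mem_toFinset, List.getD_eq_getElem _ _ hi]
    exact List.getElem_mem hi
  have hdisj : ∀ i < l.length, ∀ D ∈ F i,
      Disjoint (insert (l.getD i 0) (G.nbr (l.getD i 0))) D :=
    fun i hi D hD => disjoint_of_minimal_del ((hF i hi D).1 hD)
  have hl0 : l.getD 0 0 = v := by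
    obtain ⟨t, rfl⟩ := List.head?_eq_some_iff.1 hhd
    rfl
  apply hasLinearQuotients_flatMap_range
  · exact fun i hi =>
      (hlq i hi).map_union fun D hD => (hdisj i hi D hD).mono_left (subset_insert _ _)
  · intro i hi j hji B hB C hC
    obtain ⟨Dj, -, rfl⟩ := List.mem_map.1 hB
    obtain ⟨Di, hDi, rfl⟩ := List.mem_map.1 hC
    have hne : l.getD j 0 ≠ l.getD i 0 := by
      rw [List.getD_eq_getElem _ _ (hji.trans hi), List.getD_eq_getElem _ _ hi,
        Ne, hnd.getElem_inj_iff]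
      omega
    have hxB : l.getD i 0 ∈ G.nbr (l.getD j 0) ∪ Dj :=
      mem_union_left _ (mem_nbr.2 (hs.adj (hmem j (hji.trans hi)) (hmem i hi) hne))
    have hxC : l.getD i 0 ∉ G.nbr (l.getD i 0) ∪ Di := fun h => (mem_union.1 h).elim
      (notMem_nbr_self _) (disjoint_left.1 (hdisj i hi Di hDi) (mem_insert_self _ _))
    obtain ⟨E, hE, hsub⟩ := hs.exists_minimal_subset (hmem i hi) ((hF i hi Di).1 hDi)
    have hE0 : G.nbr v ∪ E ∈ (F 0).map (G.nbr (l.getD 0 0) ∪ ·) := by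
      rw [hl0]
      exact List.mem_map_of_mem ((hF 0 (by omega) E).2 (hl0 ▸ hE))
    exact ⟨_, hxB, hxC, 0, by omega, _, hE0, hsub⟩

end RootedList

theorem IsRootedList.exists_minimal_covers {k : Type*} [Field k] {G : FinGraph}
    {L : List (MvPolynomial ℕ k)} (hL : IsRootedList k G L) :
    ∃ Cs : List (Finset ℕ), L = Cs.map (sqfreeMonomial k) ∧
      (∀ C, C ∈ Cs ↔ Minimal G.IsVertexCover C) ∧ HasLinearQuotients Cs := by
  induction hL with
  | edgeless G h =>
    have hcov : G.IsVertexCover ∅ := fun a b hab => by simp [h a b] at hab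
    refine ⟨[∅], by simp [sqfreeMonomial], fun C => ?_, hasLinearQuotients_singleton ∅⟩
    rw [List.mem_singleton]
    constructor
    · rintro rfl
      exact ⟨hcov, fun D _ _ => empty_subset D⟩
    · exact fun hC => (hC.eq_of_le hcov (empty_subset C)).symm
  | step G v hs _ l hnd hhd hset Ls _ _ ih =>
    choose! F hLs hF hlq using ih
    exact ⟨rootedConcat G l F, (map_sqfreeMonomial_rootedConcat hF hLs).symm,
      fun C => mem_rootedConcat_iff hF hset, hasLinearQuotients_rootedConcat hF hs hnd hhd hset hlq⟩

theorem chordal_rootedList_eq_minGens_and_linearQuotients_general (k : Type*) [Field k]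
    (G : FinGraph)
    (L : List (MvPolynomial ℕ k)) (hL : IsRootedList k G L) :
    {u | u ∈ L} = minGens (coverIdeal k G) ∧
    ∀ i, 0 < i → i < L.length →
      genByVars (Submodule.colon (Ideal.span {x | x ∈ L.take i})
        (Ideal.span {L.getD i 1})) := by
  obtain ⟨Cs, rfl, hCs, hlq⟩ := hL.exists_minimal_covers
  refine ⟨?_, fun i _ hi => hlq.genByVars_colon (by simpa using hi)⟩
  rw [minGens_coverIdeal]
  ext u
  simp [hCs]

/-- Let `G` be a chordal graph with a rooted list
`R(G) = u_1, …, u_q`.  Then (1) the terms of the rooted list are exactly the minimal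
monomial generators of the cover ideal `J(G)`, and (2) `J(G)` has linear quotients with
respect to this order: every successive colon ideal `(u_1, …, u_{i-1}) : (u_i)` is
generated by a subset of the variables. -/
theorem chordal_rootedList_eq_minGens_and_linearQuotients (k : Type*) [Field k]
    (G : FinGraph) (hG : G.Chordal)
    (L : List (MvPolynomial ℕ k)) (hL : IsRootedList k G L) :
    {u | u ∈ L} = minGens (coverIdeal k G) ∧
    ∀ i, 0 < i → i < L.length →
      genByVars (Submodule.colon (Ideal.span {x | x ∈ L.take i})
        (Ideal.span {L.getD i 1})) :=
  chordal_rootedList_eq_minGens_and_linearQuotients_general k G L hL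
end

section
/- Let G be the diamond graph on vertices x_1, x_2, x_3, x_4 with edges {x_1,x_2}, {x_1,x_3}, {x_2,x_3}, {x_2,x_4}, {x_3,x_4}, and let u_1 = x_2x_3, u_2 = x_1x_3x_4, u_3 = x_1x_2x_4 (these are the minimal generators of J(G)). Then for every s ≥ 1: (1) every s-fold product u_1^{a}u_2^{b}u_3^{c} with a+b+c = s is a minimal generator of J(G)^s and has a unique such expression; and (2) listing the minimal generators of J(G)^s in decreasing lexicographic order of exponent vectors (a,b,c) gives linear quotients, i.e., each successive colon ideal is generated by a subset of the variables; explicitly, for a generator Y_r = u_1^α u_2^β u_3^γ with r ≥ 2, the colon ideal of the preceding generators equals (x_2, x_3) if β ≠ 0 and γ ≠ 0, equals (x_3) if β = 0 and γ ≠ 0, and equals (x_2) if β ≠ 0 and γ = 0. -/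
open MvPolynomial

/-- The cover ideal of the diamond graph on vertices `x_1, x_2, x_3, x_4` with edges
`{x_1,x_2}, {x_1,x_3}, {x_2,x_3}, {x_2,x_4}, {x_3,x_4}`. -/
noncomputable def diamondCoverIdeal (k : Type*) [Field k] : Ideal (MvPolynomial ℕ k) :=
  Ideal.span {(X 1 : MvPolynomial ℕ k), X 2} ⊓ Ideal.span {(X 1 : MvPolynomial ℕ k), X 3} ⊓
    Ideal.span {(X 2 : MvPolynomial ℕ k), X 3} ⊓ Ideal.span {(X 2 : MvPolynomial ℕ k), X 4} ⊓
    Ideal.span {(X 3 : MvPolynomial ℕ k), X 4}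

/-- Lexicographic comparison of exponent triples: `(a,b,c) >_lex (α,β,γ)`. -/
def triLexGt (a b c α β γ : ℕ) : Prop :=
  α < a ∨ (a = α ∧ (β < b ∨ (b = β ∧ γ < c)))


/-! The weight `x₁ + 2x₂ + 2x₃ + x₄` is at least `4` on every minimal vertex cover of the
diamond, so every monomial of `J(G)^s` has weight at least `4s`; an `s`-fold product of
`u₁ = x₂x₃`, `u₂ = x₁x₃x₄`, `u₃ = x₁x₂x₄` has weight exactly `4s`, hence no proper divisor of it
lies in `J(G)^s`. The exponent vector of `u₁^a u₂^b u₃^c` is `(b+c, a+c, a+b, b+c)`, which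
determines `(a, b, c)`. For the colon ideals, both sides are monomial ideals: a monomial `m`
multiplies `u₁^α u₂^β u₃^γ` into the span of the lex-larger products exactly when it is divisible
by `x₂` with `β ≠ 0` (exchange `x₂u₂ = x₁x₄u₁`) or by `x₃` with `γ ≠ 0` (`x₃u₃ = x₁x₄u₁`). -/

namespace MvPolynomial

variable {σ R : Type*} [CommSemiring R]

theorem mem_ideal_span_X_pair_iff {f : MvPolynomial σ R} {i j : σ} :
    f ∈ Ideal.span {(X i : MvPolynomial σ R), X j} ↔ ∀ m ∈ f.support, m i ≠ 0 ∨ m j ≠ 0 := by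
  rw [← Set.image_pair, mem_ideal_span_X_image]
  simp

theorem span_monomial_colon_eq_span_X {S : Set (σ →₀ ℕ)} {e : σ →₀ ℕ} {T : Set σ}
    (h : ∀ m, (∃ d ∈ S, d ≤ m + e) ↔ ∃ i ∈ T, m i ≠ 0) :
    (Ideal.span ((fun d => monomial d (1 : R)) '' S)).colon (Ideal.span {monomial e (1 : R)}) =
      Ideal.span (X '' T) := by
  ext f
  have hsupp : (f * monomial e (1 : R)).support = f.support.map (addRightEmbedding e) :=
    AddMonoidAlgebra.support_coeff_mul_single f _ (by simp) _
  rw [Ideal.mem_colon_span_singleton, mem_ideal_span_monomial_image, mem_ideal_span_X_image,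
    hsupp]
  simp only [Finset.mem_map, addRightEmbedding_apply, forall_exists_index, and_imp,
    forall_apply_eq_imp_iff₂, h]

noncomputable def weightIdeal (ℓ : (σ →₀ ℕ) →+ ℕ) (n : ℕ) : Ideal (MvPolynomial σ R) :=
  Ideal.span ((fun d => monomial d 1) '' {d | n ≤ ℓ d})

variable (ℓ : (σ →₀ ℕ) →+ ℕ)

theorem mem_weightIdeal_iff {f : MvPolynomial σ R} {n : ℕ} :
    f ∈ weightIdeal ℓ n ↔ ∀ m ∈ f.support, n ≤ ℓ m := by
  rw [weightIdeal, mem_ideal_span_monomial_image]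
  refine forall₂_congr fun m _ => ⟨fun ⟨d, hd, hdm⟩ => ?_, fun hm => ⟨m, hm, le_rfl⟩⟩
  rw [← add_tsub_cancel_of_le hdm, map_add]
  exact le_add_right hd

theorem weightIdeal_mul_le (n n' : ℕ) :
    weightIdeal (R := R) ℓ n * weightIdeal ℓ n' ≤ weightIdeal ℓ (n + n') := by
  rw [weightIdeal, weightIdeal, Ideal.span_mul_span', Ideal.span_le]
  rintro _ ⟨_, ⟨d, hd, rfl⟩, _, ⟨d', hd', rfl⟩, rfl⟩
  dsimp only
  rw [monomial_mul, one_mul]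
  refine Ideal.subset_span ⟨d + d', ?_, rfl⟩
  simp only [Set.mem_ofPred_eq, map_add] at hd hd' ⊢
  omega

theorem pow_le_weightIdeal {I : Ideal (MvPolynomial σ R)} {n : ℕ} (hI : I ≤ weightIdeal ℓ n)
    (s : ℕ) : I ^ s ≤ weightIdeal ℓ (s * n) := by
  induction s with
  | zero =>
    rw [pow_zero, Ideal.one_eq_top, top_le_iff, Ideal.eq_top_iff_one, weightIdeal]
    exact Ideal.subset_span ⟨0, by simp, rfl⟩
  | succ s ih =>
    rw [pow_succ, add_mul, one_mul]
    exact (Ideal.mul_mono ih hI).trans (weightIdeal_mul_le ℓ _ _)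

end MvPolynomial

namespace Diamond

variable {k : Type*} [Field k]

/-- The exponent vector of `u₁^a u₂^b u₃^c`. -/
noncomputable def exponent (a b c : ℕ) : ℕ →₀ ℕ :=
  Finsupp.single 1 (b + c) + Finsupp.single 2 (a + c) +
    Finsupp.single 3 (a + b) + Finsupp.single 4 (b + c)

@[simp]
theorem exponent_apply (a b c i : ℕ) :
    exponent a b c i =
      if i = 1 ∨ i = 4 then b + c else if i = 2 then a + c else if i = 3 then a + b else 0 := by
  simp only [exponent, Finsupp.add_apply, Finsupp.single_apply]
  split_ifs <;> omega

theorem exponent_le_iff {a b c : ℕ} {m : ℕ →₀ ℕ} :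
    exponent a b c ≤ m ↔ b + c ≤ m 1 ∧ a + c ≤ m 2 ∧ a + b ≤ m 3 ∧ b + c ≤ m 4 := by
  refine ⟨fun h => ⟨by simpa using h 1, by simpa using h 2, by simpa using h 3,
    by simpa using h 4⟩, fun ⟨h1, h2, h3, h4⟩ i => ?_⟩
  simp only [exponent_apply]
  split_ifs <;> grind

theorem prod_eq_monomial_exponent (a b c : ℕ) :
    ((X 2 : MvPolynomial ℕ k) * X 3) ^ a * (X 1 * X 3 * X 4) ^ b * (X 1 * X 2 * X 4) ^ c =
      monomial (exponent a b c) 1 := by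
  simp only [X, monomial_mul, monomial_pow, one_mul, one_pow]
  refine congrArg (monomial · 1) (Finsupp.ext fun i => ?_)
  simp only [exponent_apply, Finsupp.add_apply, Finsupp.smul_apply, Finsupp.single_apply,
    smul_eq_mul]
  split_ifs <;> omega

theorem mem_diamondCoverIdeal_iff {f : MvPolynomial ℕ k} :
    f ∈ diamondCoverIdeal k ↔ ∀ m ∈ f.support,
      (m 1 ≠ 0 ∨ m 2 ≠ 0) ∧ (m 1 ≠ 0 ∨ m 3 ≠ 0) ∧ (m 2 ≠ 0 ∨ m 3 ≠ 0) ∧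
        (m 2 ≠ 0 ∨ m 4 ≠ 0) ∧ (m 3 ≠ 0 ∨ m 4 ≠ 0) := by
  simp only [diamondCoverIdeal, Ideal.mem_inf, mem_ideal_span_X_pair_iff]
  grind

theorem prod_mem_diamondCoverIdeal_pow (a b c : ℕ) :
    ((X 2 : MvPolynomial ℕ k) * X 3) ^ a * (X 1 * X 3 * X 4) ^ b * (X 1 * X 2 * X 4) ^ c ∈
      diamondCoverIdeal k ^ (a + b + c) := by
  classical
  have hu : ∀ a b c, a + b + c = 1 → ((X 2 : MvPolynomial ℕ k) * X 3) ^ a *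
      (X 1 * X 3 * X 4) ^ b * (X 1 * X 2 * X 4) ^ c ∈ diamondCoverIdeal k := by
    intro a b c h
    rw [prod_eq_monomial_exponent, mem_diamondCoverIdeal_iff, support_monomial,
      if_neg one_ne_zero]
    simp
    omega
  rw [pow_add, pow_add]
  refine Ideal.mul_mem_mul (Ideal.mul_mem_mul ?_ ?_) ?_ <;> refine Ideal.pow_mem_pow ?_ _
  · simpa using hu 1 0 0 rfl
  · simpa using hu 0 1 0 rfl
  · simpa using hu 0 0 1 rfl

noncomputable def weight : (ℕ →₀ ℕ) →+ ℕ :=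
  Finsupp.applyAddHom 1 + 2 • Finsupp.applyAddHom 2 + 2 • Finsupp.applyAddHom 3 +
    Finsupp.applyAddHom 4

@[simp]
theorem weight_apply (m : ℕ →₀ ℕ) : weight m = m 1 + 2 * m 2 + 2 * m 3 + m 4 := by
  simp [weight]

theorem diamondCoverIdeal_le_weightIdeal : diamondCoverIdeal k ≤ weightIdeal weight 4 := by
  intro f hf
  rw [mem_weightIdeal_iff]
  intro m hm
  have := mem_diamondCoverIdeal_iff.mp hf m hm
  simp only [weight_apply]
  omega

theorem monomial_exponent_mem_minGens (a b c : ℕ) :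
    monomial (exponent a b c) (1 : k) ∈ minGens (diamondCoverIdeal k ^ (a + b + c)) := by
  refine ⟨⟨_, rfl⟩, prod_eq_monomial_exponent (k := k) a b c ▸
    prod_mem_diamondCoverIdeal_pow a b c, ?_⟩
  rintro _ ⟨d, rfl⟩ hd hdvd
  have hle : d ≤ exponent a b c := by simpa using monomial_dvd_monomial.mp hdvd
  have hweight : (a + b + c) * 4 ≤ weight d :=
    (mem_weightIdeal_iff weight).mp
      (pow_le_weightIdeal weight diamondCoverIdeal_le_weightIdeal _ hd) d (by simp)
  rw [le_antisymm hle (exponent_le_iff.mpr ?_)]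
  simp only [weight_apply] at hweight
  have h1 := hle 1; have h2 := hle 2; have h3 := hle 3; have h4 := hle 4
  simp at h1 h2 h3 h4
  omega

theorem eq_of_exponent_eq {a b c a' b' c' : ℕ} (h : exponent a b c = exponent a' b' c') :
    a = a' ∧ b = b' ∧ c = c' := by
  have h1 := DFunLike.congr_fun h 1
  have h2 := DFunLike.congr_fun h 2
  have h3 := DFunLike.congr_fun h 3
  simp at h1 h2 h3
  omega

def lexAbove (s α β γ : ℕ) : Set (ℕ →₀ ℕ) :=
  {d | ∃ a b c, a + b + c = s ∧ triLexGt a b c α β γ ∧ d = exponent a b c}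

theorem setOf_prod_lexAbove_eq (s α β γ : ℕ) :
    {m : MvPolynomial ℕ k | ∃ a b c : ℕ, a + b + c = s ∧ triLexGt a b c α β γ ∧
      m = ((X 2 : MvPolynomial ℕ k) * X 3) ^ a * (X 1 * X 3 * X 4) ^ b *
        (X 1 * X 2 * X 4) ^ c} = (monomial · 1) '' lexAbove s α β γ := by
  ext m
  simp [lexAbove, prod_eq_monomial_exponent, eq_comm, and_assoc]

theorem exists_lexAbove_le_add_iff (α β γ : ℕ) (m : ℕ →₀ ℕ) :
    (∃ d ∈ lexAbove (α + β + γ) α β γ, d ≤ m + exponent α β γ) ↔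
      ∃ i ∈ {i | i = 2 ∧ β ≠ 0 ∨ i = 3 ∧ γ ≠ 0}, m i ≠ 0 := by
  constructor
  · rintro ⟨_, ⟨a, b, c, hsum, hlex, rfl⟩, hle⟩
    obtain ⟨-, h2, h3, -⟩ := exponent_le_iff.mp hle
    simp at h2 h3
    simp only [triLexGt] at hlex
    simp only [Set.mem_ofPred_eq, or_and_right, exists_or, and_assoc, exists_eq_left]
    omega
  · rintro ⟨i, ⟨rfl, hβ⟩ | ⟨rfl, hγ⟩, hm⟩
    · refine ⟨_, ⟨α + 1, β - 1, γ, by omega, Or.inl (by omega), rfl⟩, exponent_le_iff.mpr ?_⟩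
      simp
      omega
    · refine ⟨_, ⟨α + 1, β, γ - 1, by omega, Or.inl (by omega), rfl⟩, exponent_le_iff.mpr ?_⟩
      simp
      omega

theorem colon_lexAbove_eq_span_X (α β γ : ℕ) :
    (Ideal.span ((monomial · (1 : k)) '' lexAbove (α + β + γ) α β γ)).colon
        (Ideal.span {monomial (exponent α β γ) (1 : k)}) =
      Ideal.span (X '' {i | i = 2 ∧ β ≠ 0 ∨ i = 3 ∧ γ ≠ 0}) :=
  span_monomial_colon_eq_span_X (exists_lexAbove_le_add_iff α β γ)

end Diamond

theorem diamond_powers_linear_quotients_general (k : Type*) [Field k] (s : ℕ) :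
    (∀ a b c : ℕ, a + b + c = s →
      ((X 2 : MvPolynomial ℕ k) * X 3) ^ a * (X 1 * X 3 * X 4) ^ b * (X 1 * X 2 * X 4) ^ c ∈
        minGens ((diamondCoverIdeal k) ^ s)) ∧
    (∀ a b c a' b' c' : ℕ, a + b + c = s → a' + b' + c' = s →
      ((X 2 : MvPolynomial ℕ k) * X 3) ^ a * (X 1 * X 3 * X 4) ^ b * (X 1 * X 2 * X 4) ^ c =
        ((X 2 : MvPolynomial ℕ k) * X 3) ^ a' * (X 1 * X 3 * X 4) ^ b' * (X 1 * X 2 * X 4) ^ c' →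
      a = a' ∧ b = b' ∧ c = c') ∧
    (∀ α β γ : ℕ, α + β + γ = s →
      ((0 < β ∧ 0 < γ) →
        Submodule.colon
          (Ideal.span {m : MvPolynomial ℕ k | ∃ a b c : ℕ, a + b + c = s ∧
            triLexGt a b c α β γ ∧
            m = ((X 2 : MvPolynomial ℕ k) * X 3) ^ a * (X 1 * X 3 * X 4) ^ b *
              (X 1 * X 2 * X 4) ^ c})
          (Ideal.span {((X 2 : MvPolynomial ℕ k) * X 3) ^ α * (X 1 * X 3 * X 4) ^ β *
            (X 1 * X 2 * X 4) ^ γ}) =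
        Ideal.span {(X 2 : MvPolynomial ℕ k), X 3}) ∧
      ((β = 0 ∧ 0 < γ) →
        Submodule.colon
          (Ideal.span {m : MvPolynomial ℕ k | ∃ a b c : ℕ, a + b + c = s ∧
            triLexGt a b c α β γ ∧
            m = ((X 2 : MvPolynomial ℕ k) * X 3) ^ a * (X 1 * X 3 * X 4) ^ b *
              (X 1 * X 2 * X 4) ^ c})
          (Ideal.span {((X 2 : MvPolynomial ℕ k) * X 3) ^ α * (X 1 * X 3 * X 4) ^ β *
            (X 1 * X 2 * X 4) ^ γ}) =
        Ideal.span {(X 3 : MvPolynomial ℕ k)}) ∧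
      ((0 < β ∧ γ = 0) →
        Submodule.colon
          (Ideal.span {m : MvPolynomial ℕ k | ∃ a b c : ℕ, a + b + c = s ∧
            triLexGt a b c α β γ ∧
            m = ((X 2 : MvPolynomial ℕ k) * X 3) ^ a * (X 1 * X 3 * X 4) ^ b *
              (X 1 * X 2 * X 4) ^ c})
          (Ideal.span {((X 2 : MvPolynomial ℕ k) * X 3) ^ α * (X 1 * X 3 * X 4) ^ β *
            (X 1 * X 2 * X 4) ^ γ}) =
        Ideal.span {(X 2 : MvPolynomial ℕ k)})) := by
  refine ⟨fun a b c h => ?_, fun a b c a' b' c' _ _ h => ?_, fun α β γ h => ?_⟩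
  · rw [Diamond.prod_eq_monomial_exponent, ← h]
    exact Diamond.monomial_exponent_mem_minGens a b c
  · rw [Diamond.prod_eq_monomial_exponent, Diamond.prod_eq_monomial_exponent] at h
    exact Diamond.eq_of_exponent_eq (monomial_left_injective one_ne_zero h)
  · subst h
    rw [Diamond.setOf_prod_lexAbove_eq, Diamond.prod_eq_monomial_exponent,
      Diamond.colon_lexAbove_eq_span_X]
    refine ⟨fun ⟨hβ, hγ⟩ => ?_, fun ⟨hβ, hγ⟩ => ?_, fun ⟨hβ, hγ⟩ => ?_⟩
    · rw [show {i | i = 2 ∧ β ≠ 0 ∨ i = 3 ∧ γ ≠ 0} = {2, 3} by ext; simp; omega, Set.image_pair]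
    · rw [show {i | i = 2 ∧ β ≠ 0 ∨ i = 3 ∧ γ ≠ 0} = {3} by ext; simp; omega, Set.image_singleton]
    · rw [show {i | i = 2 ∧ β ≠ 0 ∨ i = 3 ∧ γ ≠ 0} = {2} by ext; simp; omega, Set.image_singleton]

/-- For the diamond graph `G` with `u_1 = x_2x_3`, `u_2 = x_1x_3x_4`,
`u_3 = x_1x_2x_4` the minimal generators of `J(G)`, and any `s ≥ 1`:
(1) every `s`-fold product `u_1^a u_2^b u_3^c` (`a+b+c = s`) is a minimal generator of
`J(G)^s`, and its expression is unique; and (2) listing the minimal generators of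
`J(G)^s` in decreasing lexicographic order of exponent vectors gives linear quotients,
with the successive colon ideal of `Y_r = u_1^α u_2^β u_3^γ` (`r ≥ 2`) being
`(x_2, x_3)` if `β ≠ 0 ∧ γ ≠ 0`, `(x_3)` if `β = 0 ∧ γ ≠ 0`, and `(x_2)` if
`β ≠ 0 ∧ γ = 0`. -/
theorem diamond_powers_linear_quotients (k : Type*) [Field k] (s : ℕ) (hs : 1 ≤ s) :
    (∀ a b c : ℕ, a + b + c = s →
      ((X 2 : MvPolynomial ℕ k) * X 3) ^ a * (X 1 * X 3 * X 4) ^ b * (X 1 * X 2 * X 4) ^ c ∈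
        minGens ((diamondCoverIdeal k) ^ s)) ∧
    (∀ a b c a' b' c' : ℕ, a + b + c = s → a' + b' + c' = s →
      ((X 2 : MvPolynomial ℕ k) * X 3) ^ a * (X 1 * X 3 * X 4) ^ b * (X 1 * X 2 * X 4) ^ c =
        ((X 2 : MvPolynomial ℕ k) * X 3) ^ a' * (X 1 * X 3 * X 4) ^ b' * (X 1 * X 2 * X 4) ^ c' →
      a = a' ∧ b = b' ∧ c = c') ∧
    (∀ α β γ : ℕ, α + β + γ = s →
      ((0 < β ∧ 0 < γ) →
        Submodule.colon
          (Ideal.span {m : MvPolynomial ℕ k | ∃ a b c : ℕ, a + b + c = s ∧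
            triLexGt a b c α β γ ∧
            m = ((X 2 : MvPolynomial ℕ k) * X 3) ^ a * (X 1 * X 3 * X 4) ^ b *
              (X 1 * X 2 * X 4) ^ c})
          (Ideal.span {((X 2 : MvPolynomial ℕ k) * X 3) ^ α * (X 1 * X 3 * X 4) ^ β *
            (X 1 * X 2 * X 4) ^ γ}) =
        Ideal.span {(X 2 : MvPolynomial ℕ k), X 3}) ∧
      ((β = 0 ∧ 0 < γ) →
        Submodule.colon
          (Ideal.span {m : MvPolynomial ℕ k | ∃ a b c : ℕ, a + b + c = s ∧
            triLexGt a b c α β γ ∧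
            m = ((X 2 : MvPolynomial ℕ k) * X 3) ^ a * (X 1 * X 3 * X 4) ^ b *
              (X 1 * X 2 * X 4) ^ c})
          (Ideal.span {((X 2 : MvPolynomial ℕ k) * X 3) ^ α * (X 1 * X 3 * X 4) ^ β *
            (X 1 * X 2 * X 4) ^ γ}) =
        Ideal.span {(X 3 : MvPolynomial ℕ k)}) ∧
      ((0 < β ∧ γ = 0) →
        Submodule.colon
          (Ideal.span {m : MvPolynomial ℕ k | ∃ a b c : ℕ, a + b + c = s ∧
            triLexGt a b c α β γ ∧
            m = ((X 2 : MvPolynomial ℕ k) * X 3) ^ a * (X 1 * X 3 * X 4) ^ b *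
              (X 1 * X 2 * X 4) ^ c})
          (Ideal.span {((X 2 : MvPolynomial ℕ k) * X 3) ^ α * (X 1 * X 3 * X 4) ^ β *
            (X 1 * X 2 * X 4) ^ γ}) =
        Ideal.span {(X 2 : MvPolynomial ℕ k)})) :=
  diamond_powers_linear_quotients_general k s
end
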